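/- arXiv:1509.07455 — 6 statements merged into one kernel-verified Lean document; each statement's English description precedes it below -/
import Mathlib

section
/- Let n ≥ 2 and m ≥ n, let λ > 0, and suppose all processing times t_{ij} (i ∈ [n], j ∈ [m]) are i.i.d. random variables drawn from the exponential distribution with rate λ. Then the VCG mechanism satisfies E[VCG(t)] ≤ 4 · E[OPT(t)]. -/
open MeasureTheory ProbabilityTheory Finset
open Set Filter

/-- Makespan of assignment `σ` on processing-time matrix `t`
(`t i j` is the processing time of task `j` on machine `i`). -/
noncomputable def makespan {n m : ℕ} (t : Fin n → Fin m → ℝ) (σ : Fin m → Fin n) : ℝ :=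
  ⨆ i : Fin n, ∑ j ∈ Finset.univ.filter (fun j => σ j = i), t i j

/-- Optimal makespan: minimum over all assignments of tasks to machines. -/
noncomputable def OPTms {n m : ℕ} (t : Fin n → Fin m → ℝ) : ℝ :=
  ⨅ σ : Fin m → Fin n, makespan t σ

/-- Makespan of the VCG mechanism: each task goes to a machine minimizing its
processing time (a.s. unique for atomless distributions). -/
noncomputable def VCGms {n m : ℕ} (t : Fin n → Fin m → ℝ) : ℝ :=
  ⨆ i : Fin n, ∑ j : Fin m, if ∀ i', t i j ≤ t i' j then t i j else 0

/-- Machine `i` gets task `j` under VCG with tie-breaking priorities `π`: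
`i` minimizes the processing time of task `j` and, among all minimizers, `i`
has the least priority `π j`.  When `π j` is a uniformly random permutation,
this picks a uniformly random machine among the minimizers. -/
def vcgGets {n m : ℕ} (t : Fin n → Fin m → ℝ) (π : Fin m → Equiv.Perm (Fin n))
    (i : Fin n) (j : Fin m) : Prop :=
  (∀ i', t i j ≤ t i' j) ∧ ∀ i', (∀ i'', t i' j ≤ t i'' j) → π j i ≤ π j i'

open scoped Classical in
/-- Makespan of VCG under tie-breaking priorities `π`. -/
noncomputable def vcgTB {n m : ℕ} (t : Fin n → Fin m → ℝ) (π : Fin m → Equiv.Perm (Fin n)) : ℝ :=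
  ⨆ i : Fin n, ∑ j : Fin m, if vcgGets t π i j then t i j else 0

/-- Expected makespan of VCG with ties broken independently and uniformly at random
among the minimizing machines. -/
noncomputable def vcgExpectedTB {n m : ℕ} (t : Fin n → Fin m → ℝ) : ℝ :=
  (∑ π : Fin m → Equiv.Perm (Fin n), vcgTB t π) / (Fintype.card (Fin m → Equiv.Perm (Fin n)))

/-- Law of the minimum of `n` i.i.d. draws from `D` (the first order statistic `T[1:n]`). -/
noncomputable def minStat (n : ℕ) (D : Measure ℝ) : Measure ℝ :=
  (Measure.pi fun _ : Fin n => D).map (fun x => ⨅ i, x i)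

/-- Law of the maximum of `n` i.i.d. draws from `D` (the last order statistic `T[n:n]`). -/
noncomputable def maxStat (n : ℕ) (D : Measure ℝ) : Measure ℝ :=
  (Measure.pi fun _ : Fin n => D).map (fun x => ⨆ i, x i)

/-- `D` is a continuous distribution with monotone hazard rate (MHR): it has a
density `f` w.r.t. Lebesgue measure such that the hazard rate `f x / (1 - F x)`
is nondecreasing on the support (stated in cross-multiplied form, where
`1 - F x = D (Set.Ioi x)`). -/
def IsMHR (D : Measure ℝ) : Prop :=
  ∃ f : ℝ → ℝ, Measurable f ∧ (∀ x, 0 ≤ f x) ∧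
    D = MeasureTheory.volume.withDensity (fun x => ENNReal.ofReal (f x)) ∧
    ∀ ⦃x y : ℝ⦄, x ≤ y → D (Set.Ioi x) ≠ 0 → D (Set.Ioi y) ≠ 0 →
      f x * (D (Set.Ioi y)).toReal ≤ f y * (D (Set.Ioi x)).toReal

/-- `D` is `k`-stretched: `E[T[1:n][n:n]] ≥ k(n) · E[T[1:n]]` for every positive integer `n`. -/
def IsStretched (k : ℕ → ℝ) (D : Measure ℝ) : Prop :=
  ∀ n : ℕ, 0 < n →
    k n * ∫ x, x ∂(minStat n D) ≤ ∫ x, x ∂(maxStat n (minStat n D))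

set_option linter.unusedSectionVars false
set_option maxHeartbeats 1000000



section MeasAux

lemma measurable_finset_sup' {ι α : Type*} [MeasurableSpace α] (s : Finset ι)
    (hs : s.Nonempty) (f : ι → α → ℝ) (hf : ∀ i, Measurable (f i)) :
    Measurable fun a => s.sup' hs fun i => f i a := by
  induction hs using Finset.Nonempty.cons_induction with
  | singleton a => simpa using hf a
  | cons a s ha hs ih =>
      rw [show (fun x => (Finset.cons a s ha).sup' (Finset.cons_nonempty ha) fun i => f i x)
        = fun x => f a x ⊔ s.sup' hs fun i => f i x from funext fun x => Finset.sup'_cons hs _]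
      exact (hf a).sup ih

lemma measurable_finset_inf' {ι α : Type*} [MeasurableSpace α] (s : Finset ι)
    (hs : s.Nonempty) (f : ι → α → ℝ) (hf : ∀ i, Measurable (f i)) :
    Measurable fun a => s.inf' hs fun i => f i a := by
  induction hs using Finset.Nonempty.cons_induction with
  | singleton a => simpa using hf a
  | cons a s ha hs ih =>
      rw [show (fun x => (Finset.cons a s ha).inf' (Finset.cons_nonempty ha) fun i => f i x)
        = fun x => f a x ⊓ s.inf' hs fun i => f i x from funext fun x => Finset.inf'_cons hs _]
      exact (hf a).inf ih

lemma measurable_ciSup_fin {k : ℕ} {α : Type*} [MeasurableSpace α] [Nonempty (Fin k)]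
    (f : Fin k → α → ℝ) (hf : ∀ i, Measurable (f i)) :
    Measurable fun a => ⨆ i, f i a := by
  have : (fun a => ⨆ i, f i a) = fun a => Finset.univ.sup' Finset.univ_nonempty
      fun i => f i a := by
    funext a; rw [Finset.sup'_univ_eq_ciSup]
  rw [this]; exact measurable_finset_sup' _ _ f hf

lemma measurable_ciInf_fin {k : ℕ} {α : Type*} [MeasurableSpace α] [Nonempty (Fin k)]
    (f : Fin k → α → ℝ) (hf : ∀ i, Measurable (f i)) :
    Measurable fun a => ⨅ i, f i a := by
  have : (fun a => ⨅ i, f i a) = fun a => Finset.univ.inf' Finset.univ_nonempty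
      fun i => f i a := by
    funext a; rw [Finset.inf'_univ_eq_ciInf]
  rw [this]; exact measurable_finset_inf' _ _ f hf

lemma measurable_ciSup_fintype {ι α : Type*} [Fintype ι] [Nonempty ι] [MeasurableSpace α]
    (f : ι → α → ℝ) (hf : ∀ i, Measurable (f i)) :
    Measurable fun a => ⨆ i, f i a := by
  have : (fun a => ⨆ i, f i a) = fun a => Finset.univ.sup' Finset.univ_nonempty
      fun i => f i a := by
    funext a; rw [Finset.sup'_univ_eq_ciSup]
  rw [this]; exact measurable_finset_sup' _ _ f hf

lemma measurable_ciInf_fintype {ι α : Type*} [Fintype ι] [Nonempty ι] [MeasurableSpace α]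
    (f : ι → α → ℝ) (hf : ∀ i, Measurable (f i)) :
    Measurable fun a => ⨅ i, f i a := by
  have : (fun a => ⨅ i, f i a) = fun a => Finset.univ.inf' Finset.univ_nonempty
      fun i => f i a := by
    funext a; rw [Finset.inf'_univ_eq_ciInf]
  rw [this]; exact measurable_finset_inf' _ _ f hf

end MeasAux

section Harmonic

lemma harmonic_ge_aux : ∀ n : ℕ, 2 ≤ n →
    Real.log (n + 1) + (3/2 - Real.log 3) ≤ ∑ k ∈ Finset.range n, (1 : ℝ)/(k+1) := by
  intro n hn
  induction n with
  | zero => omega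
  | succ N ih =>
      rcases Nat.lt_or_ge N 2 with h2 | h2
      · interval_cases N
        · omega
        · rw [Finset.sum_range_succ, Finset.sum_range_one]
          push_cast
          have hl : Real.log (2+1 : ℝ) = Real.log 3 := by norm_num
          rw [hl]
          norm_num
      · have hkey : Real.log ((N:ℝ) + 1 + 1) - Real.log ((N:ℝ) + 1) ≤ 1/((N:ℝ)+1) := by
          have hpos : (0:ℝ) < (N:ℝ) + 1 := by positivity
          rw [← Real.log_div (by positivity) (by positivity)]
          have := Real.log_le_sub_one_of_pos
            (show (0:ℝ) < ((N:ℝ)+1+1)/((N:ℝ)+1) by positivity)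
          refine le_trans this ?_
          rw [div_sub_one (by positivity)]
          simp
        have := ih h2
        rw [Finset.sum_range_succ]
        push_cast
        push_cast at this
        linarith

lemma log3_bound : Real.log 3 ≤ 3/2 * Real.log 2 + 1/16 := by
  have h9 : Real.log 9 = 2 * Real.log 3 := by
    rw [show (9:ℝ) = 3^2 by norm_num, Real.log_pow]; push_cast; ring
  have h8 : Real.log 8 = 3 * Real.log 2 := by
    rw [show (8:ℝ) = 2^3 by norm_num, Real.log_pow]; push_cast; ring
  have h98 : Real.log 9 - Real.log 8 ≤ 1/8 := by
    rw [← Real.log_div (by norm_num) (by norm_num)]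
    have := Real.log_le_sub_one_of_pos (show (0:ℝ) < 9/8 by norm_num)
    linarith
  linarith

lemma const_bound : (Real.exp 1)⁻¹ ≤ 3/2 - Real.log 3 := by
  have h1 : (2.7182818283 : ℝ) < Real.exp 1 := Real.exp_one_gt_d9
  have h2 : Real.log 2 < 0.6931471808 := Real.log_two_lt_d9
  have h3 : Real.log 3 ≤ 3/2 * Real.log 2 + 1/16 := log3_bound
  have h4 : (Real.exp 1)⁻¹ ≤ (2.7182818283 : ℝ)⁻¹ :=
    inv_anti₀ (by norm_num) h1.le
  have h5 : ((2.7182818283 : ℝ))⁻¹ ≤ 0.3678794412 := by norm_num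
  nlinarith

lemma harmonic_ge {n : ℕ} (hn : 2 ≤ n) :
    Real.log n + (Real.exp 1)⁻¹ ≤ ∑ k ∈ Finset.range n, (1 : ℝ)/(k+1) := by
  have h1 := harmonic_ge_aux n hn
  have h2 : Real.log n ≤ Real.log (n+1) := by
    apply Real.log_le_log (by positivity)
    linarith
  have := const_bound
  linarith

end Harmonic


section Calc1D
variable {a : ℝ}

lemma tendsto_exp_neg_mul (ha : 0 < a) :
    Tendsto (fun τ : ℝ => Real.exp (-(a * τ))) atTop (nhds 0) := by
  have h1 : Tendsto (fun τ : ℝ => a * τ) atTop atTop :=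
    Filter.Tendsto.const_mul_atTop ha tendsto_id
  exact (Real.tendsto_exp_neg_atTop_nhds_zero.comp h1).congr (fun τ => rfl)

lemma integrableOn_exp_neg_mul (ha : 0 < a) (c : ℝ) :
    IntegrableOn (fun τ : ℝ => Real.exp (-(a * τ))) (Ioi c) := by
  have := exp_neg_integrableOn_Ioi c ha
  refine this.congr_fun (fun τ _ => by ring_nf) measurableSet_Ioi

lemma integral_exp_neg_mul_Ioi (ha : 0 < a) :
    ∫ τ in Ioi (0:ℝ), Real.exp (-(a * τ)) = 1/a := by
  have hderiv : ∀ τ ∈ Ici (0:ℝ),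
      HasDerivAt (fun τ : ℝ => -Real.exp (-(a * τ))/a) (Real.exp (-(a * τ))) τ := by
    intro τ _
    have h1 : HasDerivAt (fun τ : ℝ => -(a * τ)) (-a) τ := by
      simpa [neg_mul] using (hasDerivAt_id τ).const_mul (-a)
    have h2 := (h1.exp).neg.div_const a
    refine h2.congr_deriv ?_
    field_simp
  have htend : Tendsto (fun τ : ℝ => -Real.exp (-(a * τ))/a) atTop (nhds 0) := by
    have := (tendsto_exp_neg_mul ha).neg.div_const a
    simpa using this
  have := integral_Ioi_of_hasDerivAt_of_tendsto' hderiv (integrableOn_exp_neg_mul ha 0) htend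
  rw [this, mul_zero, neg_zero, Real.exp_zero]
  ring

lemma integrableOn_one_sub_pow (ha : 0 < a) (k : ℕ) :
    IntegrableOn (fun τ : ℝ => (1 - Real.exp (-(a * τ)))^k * Real.exp (-(a * τ))) (Ioi 0) := by
  refine (integrableOn_exp_neg_mul ha 0).mono' ?_ ?_
  · refine (Measurable.aestronglyMeasurable ?_)
    have hm : Measurable fun τ : ℝ => Real.exp (-(a*τ)) := by fun_prop
    exact ((measurable_const.sub hm).pow_const k).mul hm
  · filter_upwards [ae_restrict_mem measurableSet_Ioi] with τ hτ
    have h1 : 0 < Real.exp (-(a*τ)) := Real.exp_pos _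
    have h2 : Real.exp (-(a*τ)) ≤ 1 := by
      rw [Real.exp_le_one_iff]
      simp only [Left.neg_nonpos_iff]
      exact mul_nonneg ha.le (le_of_lt (Set.mem_Ioi.mp hτ))
    have h3 : 0 ≤ 1 - Real.exp (-(a*τ)) := by linarith
    have h4 : (1 - Real.exp (-(a*τ)))^k ≤ 1 := pow_le_one₀ h3 (by linarith)
    rw [Real.norm_eq_abs, abs_of_nonneg (by positivity)]
    nlinarith [pow_nonneg h3 k]

lemma integral_one_sub_pow_mul (ha : 0 < a) (k : ℕ) :
    ∫ τ in Ioi (0:ℝ), (1 - Real.exp (-(a * τ)))^k * Real.exp (-(a * τ))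
      = 1/((k+1) * a) := by
  have hderiv : ∀ τ ∈ Ici (0:ℝ),
      HasDerivAt (fun τ : ℝ => (1 - Real.exp (-(a * τ)))^(k+1)/((k+1) * a))
        ((1 - Real.exp (-(a * τ)))^k * Real.exp (-(a * τ))) τ := by
    intro τ _
    have h1 : HasDerivAt (fun τ : ℝ => -(a * τ)) (-a) τ := by
      simpa [neg_mul] using (hasDerivAt_id τ).const_mul (-a)
    have h2 : HasDerivAt (fun τ : ℝ => 1 - Real.exp (-(a * τ))) (a * Real.exp (-(a*τ))) τ := by
      have := (h1.exp).const_sub 1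
      refine this.congr_deriv ?_
      ring
    have h3 := (h2.pow (k+1)).div_const ((k+1) * a)
    refine h3.congr_deriv ?_
    simp only [Nat.add_sub_cancel, Nat.cast_add, Nat.cast_one]
    have hk : ((k:ℝ)+1) ≠ 0 := by positivity
    have haa : (a:ℝ) ≠ 0 := ne_of_gt ha
    field_simp
  have htend : Tendsto (fun τ : ℝ => (1 - Real.exp (-(a * τ)))^(k+1)/((k+1) * a)) atTop
      (nhds (1/((k+1) * a))) := by
    have h0 : Tendsto (fun τ : ℝ => 1 - Real.exp (-(a * τ))) atTop (nhds 1) := by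
      simpa using (tendsto_exp_neg_mul ha).const_sub 1
    have h1 : Tendsto (fun τ : ℝ => (1 - Real.exp (-(a * τ)))^(k+1)) atTop (nhds 1) := by
      simpa using h0.pow (k+1)
    simpa using h1.div_const ((k+1) * a)
  have := integral_Ioi_of_hasDerivAt_of_tendsto' hderiv (integrableOn_one_sub_pow ha k) htend
  rw [this]
  norm_num

lemma one_sub_pow_le_mul {u : ℝ} (hu0 : 0 ≤ u) (hu1 : u ≤ 1) (k : ℕ) :
    1 - (1-u)^k ≤ k * u := by
  have := one_add_mul_le_pow (show (-2:ℝ) ≤ -u by linarith) k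
  have h2 : 1 + k * (-u) ≤ (1 - u)^k := by
    rw [sub_eq_add_neg]; exact this
  linarith

lemma integrableOn_one_sub_one_sub_pow (ha : 0 < a) (k : ℕ) :
    IntegrableOn (fun τ : ℝ => 1 - (1 - Real.exp (-(a * τ)))^k) (Ioi 0) := by
  refine ((integrableOn_exp_neg_mul ha 0).smul (k:ℝ)).mono' ?_ ?_
  · refine (Measurable.aestronglyMeasurable ?_)
    have hm : Measurable fun τ : ℝ => Real.exp (-(a*τ)) := by fun_prop
    exact measurable_const.sub ((measurable_const.sub hm).pow_const k)
  · filter_upwards [ae_restrict_mem measurableSet_Ioi] with τ hτ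
    have h1 : 0 < Real.exp (-(a*τ)) := Real.exp_pos _
    have h2 : Real.exp (-(a*τ)) ≤ 1 := by
      rw [Real.exp_le_one_iff]; simp only [Left.neg_nonpos_iff]
      exact mul_nonneg ha.le (le_of_lt (Set.mem_Ioi.mp hτ))
    have h3 : 0 ≤ 1 - Real.exp (-(a*τ)) := by linarith
    have h4 : (1 - Real.exp (-(a*τ)))^k ≤ 1 := pow_le_one₀ h3 (by linarith)
    rw [Real.norm_eq_abs, abs_of_nonneg (by nlinarith)]
    have := one_sub_pow_le_mul h1.le h2 k
    simp only [Pi.smul_apply, smul_eq_mul]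
    linarith
  
lemma integral_one_sub_one_sub_pow (ha : 0 < a) (k : ℕ) :
    ∫ τ in Ioi (0:ℝ), (1 - (1 - Real.exp (-(a * τ)))^k)
      = (∑ j ∈ Finset.range k, 1/((j:ℝ)+1)) / a := by
  induction k with
  | zero => simp
  | succ K ih =>
      have hsplit : ∀ τ : ℝ, 1 - (1 - Real.exp (-(a * τ)))^(K+1)
          = (1 - (1 - Real.exp (-(a * τ)))^K)
            + (1 - Real.exp (-(a * τ)))^K * Real.exp (-(a * τ)) := by
        intro τ; ring
      rw [show (fun τ : ℝ => 1 - (1 - Real.exp (-(a * τ)))^(K+1)) = _ from funext hsplit]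
      rw [integral_add (integrableOn_one_sub_one_sub_pow ha K) (integrableOn_one_sub_pow ha K)]
      rw [ih, integral_one_sub_pow_mul ha K, Finset.sum_range_succ]
      have haa : (a:ℝ) ≠ 0 := ne_of_gt ha
      field_simp

end Calc1D

lemma integral_exp_neg_mul_Ioi' {a : ℝ} (ha : 0 < a) (c : ℝ) :
    ∫ τ in Set.Ioi c, Real.exp (-(a * τ)) = Real.exp (-(a*c))/a := by
  have hderiv : ∀ τ ∈ Set.Ici c,
      HasDerivAt (fun τ : ℝ => -Real.exp (-(a * τ))/a) (Real.exp (-(a * τ))) τ := by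
    intro τ _
    have h1 : HasDerivAt (fun τ : ℝ => -(a * τ)) (-a) τ := by
      simpa [neg_mul] using (hasDerivAt_id τ).const_mul (-a)
    have h2 := (h1.exp).neg.div_const a
    refine h2.congr_deriv ?_
    field_simp
  have htend : Filter.Tendsto (fun τ : ℝ => -Real.exp (-(a * τ))/a) Filter.atTop (nhds 0) := by
    have := (tendsto_exp_neg_mul ha).neg.div_const a
    simpa using this
  have := integral_Ioi_of_hasDerivAt_of_tendsto' hderiv (integrableOn_exp_neg_mul ha c) htend
  rw [this]
  ring


-- from chunk c (assumed):
section ExpM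
variable {l : ℝ} (hl : 0 < l)

lemma expMeasure_eq_withDensity :
    expMeasure l = MeasureTheory.volume.withDensity (exponentialPDF l) := rfl

include hl in
lemma expMeasure_Ioi {u : ℝ} (hu : 0 ≤ u) :
    expMeasure l (Ioi u) = ENNReal.ofReal (Real.exp (-(l*u))) := by
  rw [expMeasure_eq_withDensity, withDensity_apply _ measurableSet_Ioi]
  have h1 : ∀ τ ∈ Ioi u, exponentialPDF l τ = ENNReal.ofReal (l * Real.exp (-(l*τ))) := by
    intro τ hτ
    exact exponentialPDF_of_nonneg (le_trans hu (le_of_lt hτ))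
  rw [setLIntegral_congr_fun measurableSet_Ioi h1]
  have h2 : ∫⁻ τ in Ioi u, ENNReal.ofReal (l * Real.exp (-(l*τ)))
      = ENNReal.ofReal (∫ τ in Ioi u, l * Real.exp (-(l*τ))) := by
    rw [← MeasureTheory.ofReal_integral_eq_lintegral_ofReal]
    · exact ((integrableOn_exp_neg_mul hl u).smul l).congr
        (by filter_upwards with τ; simp [smul_eq_mul])
    · filter_upwards with τ
      positivity
  rw [h2, MeasureTheory.integral_const_mul, integral_exp_neg_mul_Ioi' hl u]
  congr 1
  field_simp

include hl in
lemma expMeasure_Ici {u : ℝ} (hu : 0 ≤ u) :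
    expMeasure l (Ici u) = ENNReal.ofReal (Real.exp (-(l*u))) := by
  have h1 : expMeasure l (Ici u) ≤ expMeasure l (Ioi u) + expMeasure l {u} := by
    rw [show Ici u = Ioi u ∪ {u} by
      ext τ; simp [le_iff_lt_or_eq, or_comm, eq_comm (a := τ)]]
    exact measure_union_le _ _
  have h2 : expMeasure l {u} = 0 := by
    rw [expMeasure_eq_withDensity, withDensity_apply _ (measurableSet_singleton u)]
    rw [Measure.restrict_singleton]
    simp
  have h3 := measure_mono (Ioi_subset_Ici_self (a := u)) (μ := expMeasure l)
  rw [expMeasure_Ioi hl hu] at *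
  rw [h2] at h1
  simpa using le_antisymm (by simpa using h1) h3

lemma expMeasure_Iio_zero : expMeasure l (Iio 0) = 0 := by
  rw [expMeasure_eq_withDensity, withDensity_apply _ measurableSet_Iio]
  exact lintegral_exponentialPDF_of_nonpos le_rfl

include hl in
lemma expMeasure_isProb : IsProbabilityMeasure (expMeasure l) :=
  isProbabilityMeasure_expMeasure hl

include hl in
lemma expMeasure_Ici_zero : expMeasure l (Ici 0) = 1 := by
  rw [expMeasure_Ici hl le_rfl]
  simp

end ExpM


noncomputable def Qm (l : ℝ) (n : ℕ) : Measure (Fin n → ℝ) :=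
  Measure.pi fun _ => expMeasure l

section Col
variable {l : ℝ} {N : ℕ}

def minset (n : ℕ) (i : Fin n) : Set (Fin n → ℝ) := {y | ∀ i', y i ≤ y i'}

lemma measurableSet_minset {n : ℕ} (i : Fin n) : MeasurableSet (minset n i) := by
  rw [minset, Set.setOf_forall]
  exact MeasurableSet.iInter fun i' =>
    measurableSet_le (measurable_pi_apply i) (measurable_pi_apply i')

def colGood (n : ℕ) (i : Fin n) : Set (Fin n → ℝ) := minset n i ∩ {y | 0 ≤ y i}

lemma measurableSet_colGood {n : ℕ} (i : Fin n) : MeasurableSet (colGood n i) :=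
  (measurableSet_minset i).inter (measurableSet_le measurable_const (measurable_pi_apply i))

noncomputable def colh (s : ℝ) {n : ℕ} (i : Fin n) : (Fin n → ℝ) → ENNReal :=
  fun y => ENNReal.ofReal (Real.exp (s * y i) - 1)

lemma measurable_colh (s : ℝ) {n : ℕ} (i : Fin n) : Measurable (colh s i) :=
  ((Real.measurable_exp.comp ((measurable_pi_apply (X := fun _ : Fin n => ℝ) i).const_mul s)).sub
    measurable_const).ennreal_ofReal

lemma insertNth_min_iff (i : Fin (N+1)) (u : ℝ) (z : Fin N → ℝ) :
    (i.insertNth u z : ∀ _ : Fin (N+1), ℝ) ∈ minset (N+1) i ↔ (∀ k, u ≤ z k) := by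
  rw [minset]
  simp only [Set.mem_setOf_eq, Fin.insertNth_apply_same]
  constructor
  · intro h k
    have := h (i.succAbove k)
    rwa [Fin.insertNth_apply_succAbove] at this
  · intro h i'
    rcases eq_or_ne i' i with rfl | hne
    · rw [Fin.insertNth_apply_same]
    · obtain ⟨k, hk⟩ := Fin.exists_succAbove_eq hne
      rw [← hk, Fin.insertNth_apply_succAbove]
      exact h k

lemma colh_insert (s : ℝ) (i : Fin (N+1)) (u : ℝ) (z : Fin N → ℝ) :
    (colGood (N+1) i).indicator (colh s i) (i.insertNth u z)
      = if (∀ k, u ≤ z k) ∧ 0 ≤ u then ENNReal.ofReal (Real.exp (s * u) - 1) else 0 := by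
  by_cases hcase : (∀ k, u ≤ z k) ∧ 0 ≤ u
  · rw [if_pos hcase, Set.indicator_of_mem, colh, Fin.insertNth_apply_same]
    exact ⟨(insertNth_min_iff i u z).mpr hcase.1, by
      simp only [Set.mem_setOf_eq, Fin.insertNth_apply_same]; exact hcase.2⟩
  · rw [if_neg hcase, Set.indicator_of_notMem]
    intro hmem
    refine hcase ⟨(insertNth_min_iff i u z).mp hmem.1, ?_⟩
    have := hmem.2
    simpa only [Set.mem_setOf_eq, Fin.insertNth_apply_same] using this

lemma pointwise_mgf_bound (s : ℝ) (hs : 0 < s) (i : Fin (N+1)) (y : Fin (N+1) → ℝ) :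
    ENNReal.ofReal (Real.exp (s * (if ∀ i', y i ≤ y i' then y i else 0)))
      ≤ 1 + (colGood (N+1) i).indicator (colh s i) y := by
  by_cases hc : ∀ i', y i ≤ y i'
  · by_cases h0 : 0 ≤ y i
    · rw [if_pos hc, Set.indicator_of_mem (by exact ⟨hc, h0⟩)]
      calc ENNReal.ofReal (Real.exp (s * y i))
          = ENNReal.ofReal (1 + (Real.exp (s * y i) - 1)) := by ring_nf
        _ ≤ ENNReal.ofReal 1 + ENNReal.ofReal (Real.exp (s * y i) - 1) :=
            ENNReal.ofReal_add_le
        _ = 1 + colh s i y := by rw [ENNReal.ofReal_one]; rfl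
    · rw [if_pos hc]
      refine le_trans ?_ le_self_add
      rw [show (1:ENNReal) = ENNReal.ofReal 1 by simp]
      refine ENNReal.ofReal_le_ofReal ?_
      rw [Real.exp_le_one_iff]
      nlinarith
  · rw [if_neg hc]
    refine le_trans ?_ le_self_add
    simp

/-- the inner (`Fin N`) integral -/
lemma col_inner (hl : 0 < l) (s : ℝ) (u : ℝ) :
    ∫⁻ z : Fin N → ℝ, (if (∀ k, u ≤ z k) ∧ 0 ≤ u
        then ENNReal.ofReal (Real.exp (s * u) - 1) else 0) ∂(Qm l N)
      = if 0 ≤ u then ENNReal.ofReal (Real.exp (s * u) - 1)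
          * (ENNReal.ofReal (Real.exp (-(l*u))))^N else 0 := by
  haveI := expMeasure_isProb hl
  by_cases h0 : 0 ≤ u
  · rw [if_pos h0]
    have heq : ∀ z : Fin N → ℝ, (if (∀ k, u ≤ z k) ∧ 0 ≤ u
        then ENNReal.ofReal (Real.exp (s * u) - 1) else 0)
        = Set.indicator (Set.univ.pi fun _ : Fin N => Ici u)
            (fun _ => ENNReal.ofReal (Real.exp (s * u) - 1)) z := by
      intro z
      by_cases hz : ∀ k, u ≤ z k
      · rw [if_pos ⟨hz, h0⟩, Set.indicator_of_mem]
        intro k _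
        exact hz k
      · rw [if_neg (by tauto), Set.indicator_of_notMem]
        intro hmem
        exact hz fun k => hmem k (Set.mem_univ k)
    rw [lintegral_congr heq, lintegral_indicator (MeasurableSet.univ_pi fun _ => measurableSet_Ici)]
    rw [setLIntegral_const]
    rw [Qm, Measure.pi_pi]
    rw [Finset.prod_congr rfl (fun _ _ => expMeasure_Ici hl h0), Finset.prod_const]
    simp [Finset.card_univ]
  · rw [if_neg h0]
    have heq : ∀ z : Fin N → ℝ, (if (∀ k, u ≤ z k) ∧ 0 ≤ u
        then ENNReal.ofReal (Real.exp (s * u) - 1) else 0) = 0 := by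
      intro z; rw [if_neg (by tauto)]
    rw [lintegral_congr heq, lintegral_zero]

end Col

section Col2
variable {l : ℝ} {N : ℕ}

lemma exp_prod_collapse (hs2 : ∀ u : ℝ, -(l*u) + (N:ℝ)*(-(l*u)) = -(2*(((N:ℝ)+1)*l/2)*u)) :
    True := trivial

lemma col_outer (hl : 0 < l) :
    ∫⁻ u : ℝ, (if 0 ≤ u then ENNReal.ofReal (Real.exp ((((N:ℝ)+1)*l/2) * u) - 1)
        * (ENNReal.ofReal (Real.exp (-(l*u))))^N else 0) ∂(expMeasure l)
      = ENNReal.ofReal (1/((N:ℝ)+1)) := by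
  set s : ℝ := ((N:ℝ)+1)*l/2 with hs_def
  have hs : 0 < s := by positivity
  have hmpdf : Measurable (exponentialPDF l) :=
    (measurable_exponentialPDFReal l).ennreal_ofReal
  have hmg : Measurable (fun u : ℝ => (if 0 ≤ u then ENNReal.ofReal (Real.exp (s * u) - 1)
      * (ENNReal.ofReal (Real.exp (-(l*u))))^N else 0)) := by
    refine Measurable.ite (measurableSet_le measurable_const measurable_id) ?_ measurable_const
    refine Measurable.mul (M := ENNReal) ?_ ?_
    · exact ((Real.measurable_exp.comp (measurable_id.const_mul s)).sub
        measurable_const).ennreal_ofReal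
    · exact ((Real.measurable_exp.comp (measurable_id.const_mul l).neg).ennreal_ofReal).pow_const N
  rw [expMeasure_eq_withDensity, lintegral_withDensity_eq_lintegral_mul _ hmpdf hmg]
  have hcollapse : ∀ u : ℝ, 0 < u →
      l * Real.exp (-(l*u)) * ((Real.exp (s*u) - 1) * (Real.exp (-(l*u)))^N)
        = l * Real.exp (-(s*u)) - l * Real.exp (-(2*s*u)) := by
    intro u _
    have e1 : Real.exp (-(l*u)) * (Real.exp (-(l*u)))^N = Real.exp (-(2*s*u)) := by
      rw [← Real.exp_nat_mul, ← Real.exp_add]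
      congr 1
      rw [hs_def]; ring
    have e2 : Real.exp (s*u) * Real.exp (-(2*s*u)) = Real.exp (-(s*u)) := by
      rw [← Real.exp_add]; congr 1; ring
    calc l * Real.exp (-(l*u)) * ((Real.exp (s*u) - 1) * (Real.exp (-(l*u)))^N)
        = l * ((Real.exp (s*u) - 1) * (Real.exp (-(l*u)) * (Real.exp (-(l*u)))^N)) := by ring
      _ = l * ((Real.exp (s*u) - 1) * Real.exp (-(2*s*u))) := by rw [e1]
      _ = l * (Real.exp (s*u) * Real.exp (-(2*s*u))) - l * Real.exp (-(2*s*u)) := by ring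
      _ = l * Real.exp (-(s*u)) - l * Real.exp (-(2*s*u)) := by rw [e2]
  have hpt : ∀ u : ℝ, (exponentialPDF l * fun u => (if 0 ≤ u then
        ENNReal.ofReal (Real.exp (s * u) - 1)
        * (ENNReal.ofReal (Real.exp (-(l*u))))^N else 0)) u
      = Set.indicator (Ioi 0) (fun u => ENNReal.ofReal
          (l * Real.exp (-(s*u)) - l * Real.exp (-(2*s*u)))) u := by
    intro u
    simp only [Pi.mul_apply]
    rcases lt_trichotomy u 0 with hu | hu | hu
    · rw [exponentialPDF_of_neg hu, if_neg (not_le.mpr hu), Set.indicator_of_notMem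
        (fun h => absurd (Set.mem_Ioi.mp h) (by linarith)), zero_mul]
    · subst hu
      rw [if_pos le_rfl, Set.indicator_of_notMem (by simp)]
      simp
    · rw [exponentialPDF_of_nonneg hu.le, if_pos hu.le,
        Set.indicator_of_mem (Set.mem_Ioi.mpr hu)]
      have hnn1 : (0:ℝ) ≤ Real.exp (s*u) - 1 := by
        have := Real.one_le_exp (by positivity : (0:ℝ) ≤ s*u)
        linarith
      rw [← ENNReal.ofReal_pow (by positivity), ← ENNReal.ofReal_mul hnn1,
        ← ENNReal.ofReal_mul (by positivity)]
      rw [hcollapse u hu]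
  rw [lintegral_congr hpt, lintegral_indicator measurableSet_Ioi]
  have hint1 : IntegrableOn (fun u : ℝ => l * Real.exp (-(s*u))) (Ioi 0) :=
    ((integrableOn_exp_neg_mul hs 0).smul l).congr
      (by filter_upwards with τ; simp [smul_eq_mul])
  have hint2 : IntegrableOn (fun u : ℝ => l * Real.exp (-(2*s*u))) (Ioi 0) :=
    ((integrableOn_exp_neg_mul (by positivity : (0:ℝ) < 2*s) 0).smul l).congr
      (by filter_upwards with τ; simp [smul_eq_mul])
  have hint3 : IntegrableOn (fun u : ℝ => l * Real.exp (-(s*u)) - l * Real.exp (-(2*s*u)))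
      (Ioi 0) := hint1.sub hint2
  have hnn : 0 ≤ᵐ[MeasureTheory.volume.restrict (Ioi (0:ℝ))]
      (fun u : ℝ => l * Real.exp (-(s*u)) - l * Real.exp (-(2*s*u))) := by
    filter_upwards [ae_restrict_mem measurableSet_Ioi] with u hu
    have h1 : Real.exp (-(2*s*u)) ≤ Real.exp (-(s*u)) := by
      apply Real.exp_le_exp.mpr
      have := Set.mem_Ioi.mp hu
      nlinarith
    have := Real.exp_pos (-(2*s*u))
    simp only [Pi.zero_apply]
    nlinarith
  rw [← MeasureTheory.ofReal_integral_eq_lintegral_ofReal hint3 hnn]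
  rw [integral_sub hint1 hint2, MeasureTheory.integral_const_mul,
    MeasureTheory.integral_const_mul, integral_exp_neg_mul_Ioi hs,
    integral_exp_neg_mul_Ioi (by positivity : (0:ℝ) < 2*s)]
  congr 1
  rw [hs_def]
  field_simp
  ring

end Col2

section Col3
variable {l : ℝ} {N : ℕ}

lemma piFinSuccAbove_symm_apply' (i : Fin (N+1)) (u : ℝ) (z : Fin N → ℝ) :
    (MeasurableEquiv.piFinSuccAbove (fun _ : Fin (N+1) => ℝ) i).symm (u, z)
      = i.insertNth u z := rfl

lemma col_mgf_lintegral (hl : 0 < l) (i : Fin (N+1)) :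
    ∫⁻ y, ENNReal.ofReal
        (Real.exp ((((N:ℝ)+1)*l/2) * (if ∀ i', y i ≤ y i' then y i else 0))) ∂(Qm l (N+1))
      ≤ 1 + ENNReal.ofReal (1/((N:ℝ)+1)) := by
  haveI := expMeasure_isProb hl
  haveI : IsProbabilityMeasure (Qm l (N+1)) := by unfold Qm; infer_instance
  set s : ℝ := ((N:ℝ)+1)*l/2 with hs_def
  have hs : 0 < s := by positivity
  refine le_trans (lintegral_mono (pointwise_mgf_bound s hs i)) ?_
  rw [lintegral_add_left measurable_const]
  simp only [lintegral_const, measure_univ, mul_one]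
  refine add_le_add_right (le_of_eq ?_) 1
  -- change of variables
  have mp := measurePreserving_piFinSuccAbove (fun _ : Fin (N+1) => expMeasure l) i
  set ep := MeasurableEquiv.piFinSuccAbove (fun _ : Fin (N+1) => ℝ) i with hep
  have hFm : Measurable ((colGood (N+1) i).indicator (colh s i)) :=
    (measurable_colh s i).indicator (measurableSet_colGood i)
  have key : ∫⁻ y, (colGood (N+1) i).indicator (colh s i) y ∂(Qm l (N+1))
      = ∫⁻ z, (colGood (N+1) i).indicator (colh s i) (ep.symm z)
          ∂((expMeasure l).prod (Measure.pi fun _ : Fin N => expMeasure l)) := by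
    exact ((MeasurePreserving.symm ep mp).lintegral_comp_emb
      (MeasurableEquiv.measurableEmbedding ep.symm) _).symm
  rw [key]
  rw [MeasureTheory.lintegral_prod (fun z => (colGood (N+1) i).indicator (colh s i) (ep.symm z))
    ((hFm.comp ep.symm.measurable).aemeasurable)]
  have hinner : ∀ u : ℝ, ∫⁻ z : Fin N → ℝ, (colGood (N+1) i).indicator (colh s i) (ep.symm (u, z))
      ∂(Measure.pi fun _ : Fin N => expMeasure l)
      = if 0 ≤ u then ENNReal.ofReal (Real.exp (s * u) - 1)
          * (ENNReal.ofReal (Real.exp (-(l*u))))^N else 0 := by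
    intro u
    have h1 : ∀ z : Fin N → ℝ, (colGood (N+1) i).indicator (colh s i) (ep.symm (u, z))
        = if (∀ k, u ≤ z k) ∧ 0 ≤ u then ENNReal.ofReal (Real.exp (s * u) - 1) else 0 := by
      intro z
      rw [piFinSuccAbove_symm_apply', colh_insert]
    rw [lintegral_congr h1]
    exact col_inner hl s u
  rw [lintegral_congr hinner]
  exact col_outer hl

lemma col_mgf_integral (hl : 0 < l) (i : Fin (N+1)) :
    Integrable (fun y : Fin (N+1) → ℝ =>
        Real.exp ((((N:ℝ)+1)*l/2) * (if ∀ i', y i ≤ y i' then y i else 0))) (Qm l (N+1))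
      ∧ 0 ≤ ∫ y, Real.exp ((((N:ℝ)+1)*l/2) * (if ∀ i', y i ≤ y i' then y i else 0)) ∂(Qm l (N+1))
      ∧ ∫ y, Real.exp ((((N:ℝ)+1)*l/2) * (if ∀ i', y i ≤ y i' then y i else 0)) ∂(Qm l (N+1))
          ≤ 1 + 1/((N:ℝ)+1) := by
  haveI := expMeasure_isProb hl
  haveI : IsProbabilityMeasure (Qm l (N+1)) := by unfold Qm; infer_instance
  set s : ℝ := ((N:ℝ)+1)*l/2 with hs_def
  set f : (Fin (N+1) → ℝ) → ℝ :=
    fun y => Real.exp (s * (if ∀ i', y i ≤ y i' then y i else 0)) with hf_def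
  have hfm : Measurable f := by
    refine Real.measurable_exp.comp (Measurable.const_mul ?_ s)
    refine Measurable.ite (measurableSet_minset i) (measurable_pi_apply i) measurable_const
  have hfnn : ∀ y, 0 ≤ f y := fun y => (Real.exp_pos _).le
  have hlin := col_mgf_lintegral hl i
  have hfin : ∫⁻ y, ENNReal.ofReal (f y) ∂(Qm l (N+1)) < ⊤ :=
    lt_of_le_of_lt hlin (ENNReal.add_lt_top.mpr ⟨ENNReal.one_lt_top, ENNReal.ofReal_lt_top⟩)
  have hint : Integrable f (Qm l (N+1)) := by
    refine ⟨hfm.aestronglyMeasurable, ?_⟩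
    rw [hasFiniteIntegral_iff_norm]
    refine lt_of_le_of_lt (le_of_eq ?_) hfin
    congr 1
    funext y
    rw [Real.norm_eq_abs, abs_of_nonneg (hfnn y)]
  have hval : ∫ y, f y ∂(Qm l (N+1)) = (∫⁻ y, ENNReal.ofReal (f y) ∂(Qm l (N+1))).toReal :=
    integral_eq_lintegral_of_nonneg_ae (Filter.Eventually.of_forall hfnn)
      hfm.aestronglyMeasurable
  refine ⟨hint, ?_, ?_⟩
  · rw [hval]; exact ENNReal.toReal_nonneg
  · rw [hval]
    have h2 : ((1 : ENNReal) + ENNReal.ofReal (1/((N:ℝ)+1))).toReal = 1 + 1/((N:ℝ)+1) := by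
      rw [ENNReal.toReal_add ENNReal.one_ne_top ENNReal.ofReal_ne_top]
      rw [ENNReal.toReal_one, ENNReal.toReal_ofReal (by positivity : (0:ℝ) ≤ 1/((N:ℝ)+1))]
    rw [← h2]
    exact ENNReal.toReal_mono
      (ENNReal.add_lt_top.mpr ⟨ENNReal.one_lt_top, ENNReal.ofReal_lt_top⟩).ne hlin

end Col3

section Det
variable {n m : ℕ} (hn : 0 < n)

/-- the VCG load of machine `i` -/
noncomputable def vcgL (x : Fin m → Fin n → ℝ) (i : Fin n) : ℝ :=
  ∑ j : Fin m, if ∀ i', x j i ≤ x j i' then x j i else 0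

/-- the load of machine `i` under assignment σ -/
noncomputable def loadOf (x : Fin m → Fin n → ℝ) (σ : Fin m → Fin n) (i : Fin n) : ℝ :=
  ∑ j ∈ Finset.univ.filter (fun j => σ j = i), x j i

lemma makespan_eq (x : Fin m → Fin n → ℝ) (σ : Fin m → Fin n) :
    makespan (fun i j => x j i) σ = ⨆ i, loadOf x σ i := rfl

lemma vcgms_eq (x : Fin m → Fin n → ℝ) :
    VCGms (fun i j => x j i) = ⨆ i, vcgL x i := rfl

include hn in
lemma loadOf_le_makespan (x : Fin m → Fin n → ℝ) (σ : Fin m → Fin n) (i : Fin n) :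
    loadOf x σ i ≤ makespan (fun i j => x j i) σ := by
  haveI : Nonempty (Fin n) := ⟨⟨0, hn⟩⟩
  rw [makespan_eq]
  exact le_ciSup (Set.Finite.bddAbove (Set.finite_range _)) i

include hn in
lemma vcg_nonneg {x : Fin m → Fin n → ℝ} (hx : ∀ j i, 0 ≤ x j i) :
    0 ≤ VCGms (fun i j => x j i) := by
  haveI : Nonempty (Fin n) := ⟨⟨0, hn⟩⟩
  have h0 : ∀ i, 0 ≤ vcgL x i := by
    intro i
    refine Finset.sum_nonneg fun j _ => ?_
    split <;> simp [hx j i]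
  refine le_trans (h0 (Classical.arbitrary _)) ?_
  rw [vcgms_eq]
  exact le_ciSup (Set.Finite.bddAbove (Set.finite_range _)) _

include hn in
lemma vcg_le_decomp (x : Fin m → Fin n → ℝ) (θ : ℝ) :
    VCGms (fun i j => x j i) ≤ θ + ∑ i : Fin n, max (vcgL x i - θ) 0 := by
  haveI : Nonempty (Fin n) := ⟨⟨0, hn⟩⟩
  rw [vcgms_eq]
  refine ciSup_le fun i => ?_
  have h1 : vcgL x i ≤ θ + max (vcgL x i - θ) 0 := by
    rcases le_or_gt (vcgL x i) θ with h | h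
    · simpa using le_trans h (by simp [le_max_iff])
    · simp [max_eq_left (by linarith : (0:ℝ) ≤ vcgL x i - θ)]
  have h2 : max (vcgL x i - θ) 0 ≤ ∑ i' : Fin n, max (vcgL x i' - θ) 0 :=
    Finset.single_le_sum (f := fun i' => max (vcgL x i' - θ) 0)
      (fun i' _ => le_max_right _ _) (Finset.mem_univ i)
  linarith

include hn in
lemma avg_le_opt (x : Fin m → Fin n → ℝ) :
    (∑ j : Fin m, ⨅ i, x j i) ≤ n * OPTms (fun i j => x j i) := by
  haveI : Nonempty (Fin n) := ⟨⟨0, hn⟩⟩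
  rw [OPTms, mul_comm, ← div_le_iff₀ (by positivity : (0:ℝ) < (n:ℝ))]
  refine le_ciInf fun σ => ?_
  rw [div_le_iff₀ (by positivity : (0:ℝ) < (n:ℝ)), mul_comm]
  have e1 : ∀ j, (⨅ i, x j i) ≤ x j (σ j) := fun j =>
    ciInf_le (Set.Finite.bddBelow (Set.finite_range (fun i => x j i))) (σ j)
  have e2 : ∑ i : Fin n, loadOf x σ i = ∑ j : Fin m, x j (σ j) := by
    have := Finset.sum_fiberwise (Finset.univ : Finset (Fin m)) σ (fun j => x j (σ j))
    rw [← this]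
    refine Finset.sum_congr rfl fun i _ => ?_
    refine Finset.sum_congr rfl fun j hj => ?_
    rw [Finset.mem_filter] at hj
    rw [hj.2]
  calc (∑ j : Fin m, ⨅ i, x j i)
      ≤ ∑ j : Fin m, x j (σ j) := Finset.sum_le_sum fun j _ => e1 j
    _ = ∑ i : Fin n, loadOf x σ i := e2.symm
    _ ≤ ∑ i : Fin n, makespan (fun i j => x j i) σ :=
        Finset.sum_le_sum fun i _ => loadOf_le_makespan hn x σ i
    _ = n * makespan (fun i j => x j i) σ := by simp [mul_comm]

include hn in
lemma min_le_opt {x : Fin m → Fin n → ℝ} (hx : ∀ j i, 0 ≤ x j i) (j₀ : Fin m) :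
    (⨅ i, x j₀ i) ≤ OPTms (fun i j => x j i) := by
  haveI : Nonempty (Fin n) := ⟨⟨0, hn⟩⟩
  refine le_ciInf fun σ => ?_
  have e1 : (⨅ i, x j₀ i) ≤ x j₀ (σ j₀) :=
    ciInf_le (Set.Finite.bddBelow (Set.finite_range (fun i => x j₀ i))) (σ j₀)
  have e2 : x j₀ (σ j₀) ≤ loadOf x σ (σ j₀) := by
    refine Finset.single_le_sum (f := fun j => x j (σ j₀)) (fun j _ => hx j _) ?_
    simp
  exact le_trans e1 (le_trans e2 (loadOf_le_makespan hn x σ _))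

include hn in
lemma opt_nonneg {x : Fin m → Fin n → ℝ} (hx : ∀ j i, 0 ≤ x j i) :
    0 ≤ OPTms (fun i j => x j i) := by
  haveI : Nonempty (Fin n) := ⟨⟨0, hn⟩⟩
  refine le_ciInf fun σ => ?_
  have i0 : Fin n := Classical.arbitrary _
  refine le_trans ?_ (loadOf_le_makespan hn x σ i0)
  exact Finset.sum_nonneg fun j _ => hx j i0

include hn in
lemma opt_le_sum {x : Fin m → Fin n → ℝ} (hx : ∀ j i, 0 ≤ x j i) :
    OPTms (fun i j => x j i) ≤ ∑ j : Fin m, ∑ i : Fin n, x j i := by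
  haveI : Nonempty (Fin n) := ⟨⟨0, hn⟩⟩
  have hσ : OPTms (fun i j => x j i) ≤ makespan (fun i j => x j i) (fun _ => Classical.arbitrary _) :=
    ciInf_le (Set.Finite.bddBelow (Set.finite_range _)) _
  refine le_trans hσ ?_
  rw [makespan_eq]
  refine ciSup_le fun i => ?_
  calc loadOf x (fun _ => Classical.arbitrary _) i
      ≤ ∑ j : Fin m, x j i :=
        Finset.sum_le_sum_of_subset_of_nonneg (Finset.filter_subset _ _)
          (fun j _ _ => hx j i)
    _ ≤ ∑ j : Fin m, ∑ i : Fin n, x j i :=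
        Finset.sum_le_sum fun j _ =>
          Finset.single_le_sum (f := fun i' => x j i') (fun i' _ => hx j i') (Finset.mem_univ i)

include hn in
lemma opt_le_summin {x : Fin m → Fin n → ℝ} (hx : ∀ j i, 0 ≤ x j i) :
    OPTms (fun i j => x j i) ≤ ∑ j : Fin m, ⨅ i, x j i := by
  haveI : Nonempty (Fin n) := ⟨⟨0, hn⟩⟩
  have hex : ∀ j : Fin m, ∃ i : Fin n, x j i = ⨅ i', x j i' := by
    intro j
    obtain ⟨i, _, hi⟩ := Finset.exists_mem_eq_inf' (Finset.univ_nonempty) (fun i => x j i)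
    exact ⟨i, by rw [← Finset.inf'_univ_eq_ciInf, hi]⟩
  choose σ hσ using hex
  refine le_trans (ciInf_le (Set.Finite.bddBelow (Set.finite_range _)) σ) ?_
  rw [makespan_eq]
  refine ciSup_le fun i => ?_
  have hnn : ∀ j : Fin m, 0 ≤ ⨅ i', x j i' := by
    intro j
    exact le_ciInf fun i' => hx j i'
  calc loadOf x σ i
      = ∑ j ∈ Finset.univ.filter (fun j => σ j = i), ⨅ i', x j i' := by
        refine Finset.sum_congr rfl fun j hj => ?_
        rw [Finset.mem_filter] at hj
        rw [← hj.2, hσ j]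
    _ ≤ ∑ j : Fin m, ⨅ i', x j i' :=
        Finset.sum_le_sum_of_subset_of_nonneg (Finset.filter_subset _ _)
          (fun j _ _ => hnn j)

end Det

section Mat
variable {l : ℝ} {n m : ℕ}

noncomputable def Pm (l : ℝ) (n m : ℕ) : Measure (Fin m → Fin n → ℝ) :=
  Measure.pi fun _ : Fin m => Qm l n

lemma Qm_isProb (hl : 0 < l) : IsProbabilityMeasure (Qm l n) := by
  haveI := expMeasure_isProb hl
  unfold Qm; infer_instance

lemma Pm_isProb (hl : 0 < l) : IsProbabilityMeasure (Pm l n m) := by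
  haveI := Qm_isProb (n := n) hl
  unfold Pm; infer_instance

lemma integral_pi_pow {α : Type*} [MeasurableSpace α] (Q : Measure α) [IsProbabilityMeasure Q]
    (M : ℕ) (f : α → ℝ) (hf : Integrable f Q) :
    Integrable (fun x : Fin M → α => ∏ j, f (x j)) (Measure.pi fun _ => Q)
      ∧ ∫ x : Fin M → α, ∏ j, f (x j) ∂(Measure.pi fun _ => Q) = (∫ y, f y ∂Q)^M := by
  letI : MeasureSpace α := ⟨Q⟩
  have hvol : (volume : Measure (Fin M → α)) = Measure.pi fun _ => Q := volume_pi
  constructor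
  · rw [← hvol]
    exact Integrable.fintype_prod (f := fun _ : Fin M => f) (fun _ => hf)
  · rw [← hvol]
    have := MeasureTheory.integral_fintype_prod_eq_pow (𝕜 := ℝ) (ι := Fin M) f (μ := Q)
    rw [hvol]; simpa [Fintype.card_fin] using this

lemma Pm_allcols (hl : 0 < l) {B : Set (Fin n → ℝ)} (hB : MeasurableSet B) :
    Pm l n m {x | ∀ j, x j ∈ B} = (Qm l n B)^m := by
  have hset : {x : Fin m → Fin n → ℝ | ∀ j, x j ∈ B}
      = Set.univ.pi (fun _ : Fin m => B) := by
    ext x; simp [Set.mem_pi]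
  haveI := Qm_isProb (n := n) hl
  rw [hset, Pm, Measure.pi_pi, Finset.prod_const, Finset.card_univ, Fintype.card_fin]

lemma Pm_col (hl : 0 < l) (j : Fin m) {B : Set (Fin n → ℝ)} (hB : MeasurableSet B) :
    Pm l n m {x | x j ∈ B} = Qm l n B := by
  haveI := Qm_isProb (n := n) hl
  have hset : {x : Fin m → Fin n → ℝ | x j ∈ B}
      = Set.univ.pi (fun j' => if j' = j then B else Set.univ) := by
    ext x
    simp only [Set.mem_pi, Set.mem_univ, forall_true_left, Set.mem_setOf_eq]
    constructor
    · intro h j'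
      by_cases hj : j' = j
      · subst hj; simp [h]
      · simp [hj]
    · intro h
      have := h j
      simpa using this
  rw [hset, Pm, Measure.pi_pi]
  have hval : ∀ j' : Fin m, Qm l n (if j' = j then B else Set.univ)
      = if j' = j then Qm l n B else 1 := by
    intro j'; split <;> simp
  rw [Finset.prod_congr rfl (fun j' _ => hval j'), Finset.prod_ite_eq' Finset.univ j
    (fun _ => Qm l n B)]
  simp

lemma measurableSet_tail (τ : ℝ) : MeasurableSet {y : Fin n → ℝ | ∀ i, τ < y i} := by
  rw [Set.setOf_forall]
  exact MeasurableSet.iInter fun i => measurableSet_lt measurable_const (measurable_pi_apply i)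

lemma Qm_tail (hl : 0 < l) {τ : ℝ} (hτ : 0 ≤ τ) :
    Qm l n {y | ∀ i, τ < y i} = ENNReal.ofReal (Real.exp (-((n*l)*τ))) := by
  have hset : {y : Fin n → ℝ | ∀ i, τ < y i} = Set.univ.pi (fun _ : Fin n => Ioi τ) := by
    ext y; simp [Set.mem_pi]
  haveI := expMeasure_isProb hl
  rw [hset, Qm, Measure.pi_pi]
  rw [Finset.prod_congr rfl (fun (i : Fin n) _ => expMeasure_Ioi hl hτ), Finset.prod_const,
    Finset.card_univ, Fintype.card_fin]
  rw [← ENNReal.ofReal_pow (by positivity), ← Real.exp_nat_mul]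
  congr 1
  ring

lemma Qm_cdf (hl : 0 < l) {τ : ℝ} (hτ : 0 ≤ τ) :
    Qm l n {y | ¬ ∀ i, τ < y i} = 1 - ENNReal.ofReal (Real.exp (-((n*l)*τ))) := by
  haveI := Qm_isProb (n := n) hl
  have hset : {y : Fin n → ℝ | ¬ ∀ i, τ < y i} = {y : Fin n → ℝ | ∀ i, τ < y i}ᶜ := rfl
  rw [hset, measure_compl (measurableSet_tail τ) (measure_ne_top _ _), Qm_tail hl hτ,
    measure_univ]

lemma measurableSet_nonnegCol : MeasurableSet {y : Fin n → ℝ | ∀ i, 0 ≤ y i} := by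
  rw [Set.setOf_forall]
  exact MeasurableSet.iInter fun i => measurableSet_le measurable_const (measurable_pi_apply i)

lemma Pm_ae_nonneg (hl : 0 < l) : ∀ᵐ x ∂(Pm l n m), ∀ j i, 0 ≤ x j i := by
  haveI := Pm_isProb (n := n) (m := m) hl
  haveI := expMeasure_isProb hl
  have hQB : Qm l n {y | ∀ i, 0 ≤ y i} = 1 := by
    have hset : {y : Fin n → ℝ | ∀ i, 0 ≤ y i} = Set.univ.pi (fun _ : Fin n => Ici 0) := by
      ext y
      simp only [Set.mem_pi, Set.mem_univ, forall_true_left, Set.mem_setOf_eq, Set.mem_Ici]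
    rw [hset, Qm, Measure.pi_pi]
    rw [Finset.prod_congr rfl (fun (i : Fin n) _ => expMeasure_Ici_zero hl), Finset.prod_const]
    simp
  have hG : Pm l n m {x | ∀ j, x j ∈ {y : Fin n → ℝ | ∀ i, 0 ≤ y i}} = 1 := by
    rw [Pm_allcols hl measurableSet_nonnegCol, hQB, one_pow]
  rw [ae_iff]
  have hGm : MeasurableSet {x : Fin m → Fin n → ℝ | ∀ j, x j ∈ {y : Fin n → ℝ | ∀ i, 0 ≤ y i}} := by
    rw [Set.setOf_forall]
    exact MeasurableSet.iInter fun j => measurable_pi_apply j measurableSet_nonnegCol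
  have hcompl : {x : Fin m → Fin n → ℝ | ¬ ∀ (j : Fin m) (i : Fin n), 0 ≤ x j i}
      = {x : Fin m → Fin n → ℝ | ∀ j, x j ∈ {y : Fin n → ℝ | ∀ i, 0 ≤ y i}}ᶜ := by
    ext x; simp [Set.mem_setOf_eq]
  rw [hcompl, measure_compl hGm (measure_ne_top _ _), hG, measure_univ]
  simp

end Mat

section Mat2
variable {l : ℝ} {n m : ℕ}

lemma lt_iInf_iff_fin {k : ℕ} (hk : 0 < k) (g : Fin k → ℝ) (τ : ℝ) :
    τ < (⨅ i, g i) ↔ ∀ i, τ < g i := by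
  haveI : Nonempty (Fin k) := ⟨⟨0, hk⟩⟩
  rw [← Finset.inf'_univ_eq_ciInf, Finset.lt_inf'_iff]
  simp

lemma lt_ciSup_iff_fin {k : ℕ} (hk : 0 < k) (g : Fin k → ℝ) (τ : ℝ) :
    τ < (⨆ i, g i) ↔ ∃ i, τ < g i := by
  haveI : Nonempty (Fin k) := ⟨⟨0, hk⟩⟩
  rw [← Finset.sup'_univ_eq_ciSup, Finset.lt_sup'_iff]
  simp

lemma measurable_coord (j : Fin m) (i : Fin n) :
    Measurable (fun x : Fin m → Fin n → ℝ => x j i) :=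
  (measurable_pi_apply i).comp (measurable_pi_apply j)

lemma measurable_Xmin (hn : 0 < n) (j : Fin m) :
    Measurable (fun x : Fin m → Fin n → ℝ => ⨅ i, x j i) := by
  haveI : Nonempty (Fin n) := ⟨⟨0, hn⟩⟩
  exact measurable_ciInf_fin _ (fun i => measurable_coord j i)

lemma ae_Xmin_nonneg (hl : 0 < l) (hn : 0 < n) (j : Fin m) :
    ∀ᵐ x ∂(Pm l n m), 0 ≤ ⨅ i, x j i := by
  haveI : Nonempty (Fin n) := ⟨⟨0, hn⟩⟩
  filter_upwards [Pm_ae_nonneg hl] with x hx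
  exact le_ciInf fun i => hx j i

lemma Xmin_lintegral (hl : 0 < l) (hn : 0 < n) (j : Fin m) :
    ∫⁻ x, ENNReal.ofReal (⨅ i, x j i) ∂(Pm l n m) = ENNReal.ofReal (1/((n:ℝ)*l)) := by
  haveI := Pm_isProb (n := n) (m := m) hl
  haveI : Nonempty (Fin n) := ⟨⟨0, hn⟩⟩
  have hν : (0:ℝ) < (n:ℝ)*l := by positivity
  rw [lintegral_eq_lintegral_meas_lt _ (ae_Xmin_nonneg hl hn j)
    (measurable_Xmin hn j).aemeasurable]
  have hpt : ∀ τ ∈ Ioi (0:ℝ), Pm l n m {x | τ < ⨅ i, x j i}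
      = ENNReal.ofReal (Real.exp (-(((n:ℝ)*l) * τ))) := by
    intro τ hτ
    have hset : {x : Fin m → Fin n → ℝ | τ < ⨅ i, x j i}
        = {x : Fin m → Fin n → ℝ | x j ∈ {y | ∀ i, τ < y i}} := by
      ext x
      simp only [Set.mem_setOf_eq]
      exact lt_iInf_iff_fin hn _ τ
    rw [hset, Pm_col hl j (measurableSet_tail τ), Qm_tail hl (le_of_lt (Set.mem_Ioi.mp hτ))]
  rw [setLIntegral_congr_fun measurableSet_Ioi hpt]
  rw [← MeasureTheory.ofReal_integral_eq_lintegral_ofReal (integrableOn_exp_neg_mul hν 0)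
    (Filter.Eventually.of_forall fun τ => (Real.exp_pos _).le)]
  rw [integral_exp_neg_mul_Ioi hν]

lemma Xmin_integrable (hl : 0 < l) (hn : 0 < n) (j : Fin m) :
    Integrable (fun x : Fin m → Fin n → ℝ => ⨅ i, x j i) (Pm l n m) := by
  refine ⟨(measurable_Xmin hn j).aestronglyMeasurable, ?_⟩
  rw [hasFiniteIntegral_iff_norm]
  have hcong : ∫⁻ x, ENNReal.ofReal ‖⨅ i, x j i‖ ∂(Pm l n m)
      = ∫⁻ x, ENNReal.ofReal (⨅ i, x j i) ∂(Pm l n m) := by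
    refine lintegral_congr_ae ?_
    filter_upwards [ae_Xmin_nonneg hl hn j] with x hx
    rw [Real.norm_eq_abs, abs_of_nonneg hx]
  rw [hcong, Xmin_lintegral hl hn j]
  exact ENNReal.ofReal_lt_top

lemma Xmin_integral (hl : 0 < l) (hn : 0 < n) (j : Fin m) :
    ∫ x, (⨅ i, x j i) ∂(Pm l n m) = 1/((n:ℝ)*l) := by
  rw [integral_eq_lintegral_of_nonneg_ae (ae_Xmin_nonneg hl hn j)
    (measurable_Xmin hn j).aestronglyMeasurable, Xmin_lintegral hl hn j,
    ENNReal.toReal_ofReal (by positivity)]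

end Mat2

section Mat3
variable {l : ℝ} {n m : ℕ}

lemma measurable_Mmax (hn : 0 < n) (hm : 0 < m) :
    Measurable (fun x : Fin m → Fin n → ℝ => ⨆ j, ⨅ i, x j i) := by
  haveI : Nonempty (Fin m) := ⟨⟨0, hm⟩⟩
  exact measurable_ciSup_fin _ (fun j => measurable_Xmin hn j)

lemma ae_Mmax_nonneg (hl : 0 < l) (hn : 0 < n) (hm : 0 < m) :
    ∀ᵐ x ∂(Pm l n m), 0 ≤ ⨆ j, ⨅ i, x j i := by
  haveI : Nonempty (Fin m) := ⟨⟨0, hm⟩⟩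
  haveI : Nonempty (Fin n) := ⟨⟨0, hn⟩⟩
  filter_upwards [Pm_ae_nonneg hl] with x hx
  have h1 : 0 ≤ ⨅ i, x (⟨0, hm⟩ : Fin m) i := le_ciInf fun i => hx _ i
  have h2 : (⨅ i, x (⟨0, hm⟩ : Fin m) i) ≤ ⨆ j, ⨅ i, x j i :=
    le_ciSup (f := fun j : Fin m => ⨅ i, x j i)
      (Set.Finite.bddAbove (Set.finite_range _)) _
  linarith

lemma ae_Mmax_le_sum (hl : 0 < l) (hn : 0 < n) (hm : 0 < m) :
    ∀ᵐ x ∂(Pm l n m), (⨆ j, ⨅ i, x j i) ≤ ∑ j : Fin m, ⨅ i, x j i := by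
  haveI : Nonempty (Fin m) := ⟨⟨0, hm⟩⟩
  haveI : Nonempty (Fin n) := ⟨⟨0, hn⟩⟩
  filter_upwards [Pm_ae_nonneg hl] with x hx
  refine ciSup_le fun j => ?_
  refine Finset.single_le_sum (f := fun j' => ⨅ i, x j' i) ?_ (Finset.mem_univ j)
  intro j' _
  exact le_ciInf fun i => hx j' i

lemma Mmax_integrable (hl : 0 < l) (hn : 0 < n) (hm : 0 < m) :
    Integrable (fun x : Fin m → Fin n → ℝ => ⨆ j, ⨅ i, x j i) (Pm l n m) := by
  refine Integrable.mono' (integrable_finset_sum Finset.univ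
    (fun j _ => Xmin_integrable hl hn j)) (measurable_Mmax hn hm).aestronglyMeasurable ?_
  filter_upwards [ae_Mmax_nonneg hl hn hm, ae_Mmax_le_sum hl hn hm] with x h1 h2
  rw [Real.norm_eq_abs, abs_of_nonneg h1]
  exact h2

lemma Mmax_tail (hl : 0 < l) (hn : 0 < n) (hm : 0 < m) {τ : ℝ} (hτ : 0 < τ) :
    Pm l n m {x | τ < ⨆ j, ⨅ i, x j i}
      = 1 - (1 - ENNReal.ofReal (Real.exp (-(((n:ℝ)*l)*τ))))^m := by
  haveI := Pm_isProb (n := n) (m := m) hl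
  have hBm : MeasurableSet {y : Fin n → ℝ | ¬ ∀ i, τ < y i} :=
    (measurableSet_tail τ).compl
  have hset : {x : Fin m → Fin n → ℝ | τ < ⨆ j, ⨅ i, x j i}
      = {x : Fin m → Fin n → ℝ | ∀ j, x j ∈ {y : Fin n → ℝ | ¬ ∀ i, τ < y i}}ᶜ := by
    ext x
    simp only [Set.mem_setOf_eq, Set.mem_compl_iff]
    rw [lt_ciSup_iff_fin hm]
    constructor
    · rintro ⟨j, hj⟩ hall
      exact hall j ((lt_iInf_iff_fin hn _ τ).mp hj)
    · intro h
      push_neg at h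
      obtain ⟨j, hj⟩ := h
      exact ⟨j, (lt_iInf_iff_fin hn _ τ).mpr hj⟩
  have hGm : MeasurableSet {x : Fin m → Fin n → ℝ | ∀ j, x j ∈ {y : Fin n → ℝ | ¬ ∀ i, τ < y i}} := by
    rw [Set.setOf_forall]
    exact MeasurableSet.iInter fun j => measurable_pi_apply j hBm
  rw [hset, measure_compl hGm (measure_ne_top _ _), measure_univ]
  rw [Pm_allcols hl hBm, Qm_cdf hl (le_of_lt hτ)]

lemma Mmax_integral_ge (hl : 0 < l) (hnm : n ≤ m) (hn : 0 < n) :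
    (∑ k ∈ Finset.range n, 1/((k:ℝ)+1))/((n:ℝ)*l)
      ≤ ∫ x, (⨆ j, ⨅ i, x j i) ∂(Pm l n m) := by
  have hm : 0 < m := lt_of_lt_of_le hn hnm
  haveI := Pm_isProb (n := n) (m := m) hl
  have hν : (0:ℝ) < (n:ℝ)*l := by positivity
  have hint := Mmax_integrable hl hn hm
  rw [integral_eq_lintegral_of_nonneg_ae (ae_Mmax_nonneg hl hn hm)
    (measurable_Mmax hn hm).aestronglyMeasurable]
  have hfin : ∫⁻ x, ENNReal.ofReal (⨆ j, ⨅ i, x j i) ∂(Pm l n m) ≠ ⊤ := by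
    have h2 := hint.2
    rw [hasFiniteIntegral_iff_norm] at h2
    have hcong : ∫⁻ x, ENNReal.ofReal ‖⨆ j, ⨅ i, x j i‖ ∂(Pm l n m)
        = ∫⁻ x, ENNReal.ofReal (⨆ j, ⨅ i, x j i) ∂(Pm l n m) := by
      refine lintegral_congr_ae ?_
      filter_upwards [ae_Mmax_nonneg hl hn hm] with x hx
      rw [Real.norm_eq_abs, abs_of_nonneg hx]
    rw [hcong] at h2
    exact h2.ne
  have hlow : ENNReal.ofReal ((∑ k ∈ Finset.range n, 1/((k:ℝ)+1))/((n:ℝ)*l))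
      ≤ ∫⁻ x, ENNReal.ofReal (⨆ j, ⨅ i, x j i) ∂(Pm l n m) := by
    rw [lintegral_eq_lintegral_meas_lt _ (ae_Mmax_nonneg hl hn hm)
      (measurable_Mmax hn hm).aemeasurable]
    have hptlow : ∀ τ ∈ Ioi (0:ℝ),
        ENNReal.ofReal (1 - (1 - Real.exp (-(((n:ℝ)*l) * τ)))^n)
          ≤ Pm l n m {x | τ < ⨆ j, ⨅ i, x j i} := by
      intro τ hτ
      have hτ' := Set.mem_Ioi.mp hτ
      rw [Mmax_tail hl hn hm hτ']
      have he1 : Real.exp (-(((n:ℝ)*l) * τ)) ≤ 1 := by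
        rw [Real.exp_le_one_iff]
        simp only [Left.neg_nonpos_iff]
        positivity
      have he0 : (0:ℝ) ≤ Real.exp (-(((n:ℝ)*l) * τ)) := (Real.exp_pos _).le
      have hq1 : ENNReal.ofReal (Real.exp (-(((n:ℝ)*l) * τ))) ≤ 1 := by
        rw [← ENNReal.ofReal_one]
        exact ENNReal.ofReal_le_ofReal he1
      have hc1 : (1 : ENNReal) - ENNReal.ofReal (Real.exp (-(((n:ℝ)*l) * τ)))
          = ENNReal.ofReal (1 - Real.exp (-(((n:ℝ)*l) * τ))) := by
        rw [ENNReal.ofReal_sub _ he0, ENNReal.ofReal_one]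
      have hstep : (1 - ENNReal.ofReal (Real.exp (-(((n:ℝ)*l)*τ))))^m
          ≤ (1 - ENNReal.ofReal (Real.exp (-(((n:ℝ)*l)*τ))))^n := by
        have hle1 : (1 : ENNReal) - ENNReal.ofReal (Real.exp (-(((n:ℝ)*l)*τ))) ≤ 1 :=
          tsub_le_self
        calc (1 - ENNReal.ofReal (Real.exp (-(((n:ℝ)*l)*τ))))^m
            = (1 - ENNReal.ofReal (Real.exp (-(((n:ℝ)*l)*τ))))^n
              * (1 - ENNReal.ofReal (Real.exp (-(((n:ℝ)*l)*τ))))^(m-n) := by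
              rw [← pow_add]
              congr 1
              omega
          _ ≤ (1 - ENNReal.ofReal (Real.exp (-(((n:ℝ)*l)*τ))))^n * 1 := by
              refine mul_le_mul_right (pow_le_one' hle1 _) _
          _ = _ := mul_one _
      refine le_trans (le_of_eq ?_) (tsub_le_tsub_left hstep 1)
      have hpow0 : (0:ℝ) ≤ (1 - Real.exp (-(((n:ℝ)*l)*τ)))^n := pow_nonneg (by linarith) n
      rw [ENNReal.ofReal_sub _ hpow0, ENNReal.ofReal_one,
        ENNReal.ofReal_pow (by linarith : (0:ℝ) ≤ 1 - Real.exp (-(((n:ℝ)*l)*τ))), ← hc1]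
    have hbig : ∫⁻ τ in Ioi (0:ℝ), ENNReal.ofReal (1 - (1 - Real.exp (-(((n:ℝ)*l) * τ)))^n)
        ≤ ∫⁻ τ in Ioi (0:ℝ), Pm l n m {x | τ < ⨆ j, ⨅ i, x j i} := by
      refine setLIntegral_mono_ae ?_ ?_
      · refine Measurable.aemeasurable (Antitone.measurable ?_)
        intro τ1 τ2 h12
        exact measure_mono fun x hx => lt_of_le_of_lt h12 hx
      · filter_upwards with τ
        exact hptlow τ
    refine le_trans (le_of_eq ?_) hbig
    rw [← MeasureTheory.ofReal_integral_eq_lintegral_ofReal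
      (integrableOn_one_sub_one_sub_pow hν n) ?_]
    · rw [integral_one_sub_one_sub_pow hν n]
    · filter_upwards [ae_restrict_mem measurableSet_Ioi] with τ hτ
      have he1 : Real.exp (-(((n:ℝ)*l) * τ)) ≤ 1 := by
        rw [Real.exp_le_one_iff]
        simp only [Left.neg_nonpos_iff]
        have := Set.mem_Ioi.mp hτ
        positivity
      have he0 : (0:ℝ) ≤ Real.exp (-(((n:ℝ)*l) * τ)) := (Real.exp_pos _).le
      have := pow_le_one₀ (by linarith : (0:ℝ) ≤ 1 - Real.exp (-(((n:ℝ)*l)*τ))) (by linarith)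
        (n := n)
      simp only [Pi.zero_apply]
      linarith
  calc (∑ k ∈ Finset.range n, 1/((k:ℝ)+1))/((n:ℝ)*l)
      = (ENNReal.ofReal ((∑ k ∈ Finset.range n, 1/((k:ℝ)+1))/((n:ℝ)*l))).toReal := by
        rw [ENNReal.toReal_ofReal (by positivity)]
    _ ≤ (∫⁻ x, ENNReal.ofReal (⨆ j, ⨅ i, x j i) ∂(Pm l n m)).toReal :=
        ENNReal.toReal_mono hfin hlow

end Mat3

section Mat4
variable {l : ℝ} {n m N M : ℕ}

lemma Pm_def : Pm l n m = Measure.pi fun _ : Fin m => Qm l n := rfl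

lemma measurable_vcgL (i : Fin n) :
    Measurable (fun x : Fin m → Fin n → ℝ => vcgL x i) := by
  refine Finset.measurable_sum _ fun j _ => ?_
  refine Measurable.ite ?_ (measurable_coord j i) measurable_const
  rw [Set.setOf_forall]
  exact MeasurableSet.iInter fun i' =>
    measurableSet_le (measurable_coord j i) (measurable_coord j i')

lemma exp_vcgL (s : ℝ) (x : Fin m → Fin n → ℝ) (i : Fin n) :
    Real.exp (s * vcgL x i)
      = ∏ j, Real.exp (s * (if ∀ i', x j i ≤ x j i' then x j i else 0)) := by
  rw [vcgL, Finset.mul_sum, Real.exp_sum]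

lemma posPart_le_exp' {s v θ : ℝ} (hs : 0 < s) :
    max (v - θ) 0 ≤ Real.exp (s*v) * (Real.exp (-(s*θ)) / (s * Real.exp 1)) := by
  have he : 0 < s * Real.exp 1 := by positivity
  rcases le_or_gt (v - θ) 0 with h | h
  · rw [max_eq_right h]; positivity
  · rw [max_eq_left h.le]
    have hcomb : Real.exp (s*v) * Real.exp (-(s*θ)) = Real.exp (s*(v-θ)) := by
      rw [← Real.exp_add]; congr 1; ring
    rw [← mul_div_assoc, hcomb, le_div_iff₀ he]
    have h3 := Real.add_one_le_exp (s*(v-θ) - 1)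
    have h4 : Real.exp (s*(v-θ) - 1) * Real.exp 1 = Real.exp (s*(v-θ)) := by
      rw [← Real.exp_add]; ring_nf
    nlinarith [Real.exp_pos (s*(v-θ) - 1), Real.exp_pos (1:ℝ)]

lemma vcg_chernoff (hl : 0 < l) (i : Fin (N+1)) (θ : ℝ) :
    ∫ x, max (vcgL x i - θ) 0 ∂(Pm l (N+1) M)
      ≤ Real.exp (-((((N:ℝ)+1)*l/2) * θ)) / ((((N:ℝ)+1)*l/2) * Real.exp 1)
        * (1 + 1/((N:ℝ)+1))^M := by
  haveI := Qm_isProb (n := N+1) hl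
  set s : ℝ := ((N:ℝ)+1)*l/2 with hs_def
  have hs : 0 < s := by positivity
  set f : (Fin (N+1) → ℝ) → ℝ :=
    fun y => Real.exp (s * (if ∀ i', y i ≤ y i' then y i else 0)) with hf_def
  obtain ⟨hfint, hf0, hfle⟩ := col_mgf_integral hl i
  obtain ⟨hprodint, hprodval⟩ := integral_pi_pow (Qm l (N+1)) M f hfint
  rw [← Pm_def] at hprodint hprodval
  have hpt : ∀ x : Fin M → Fin (N+1) → ℝ, max (vcgL x i - θ) 0
      ≤ (∏ j, f (x j)) * (Real.exp (-(s*θ)) / (s * Real.exp 1)) := by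
    intro x
    have h1 := posPart_le_exp' (v := vcgL x i) (θ := θ) hs
    rw [exp_vcgL] at h1
    exact h1
  have hnn : 0 ≤ Real.exp (-(s*θ)) / (s * Real.exp 1) := by positivity
  refine le_trans (integral_mono_of_nonneg
    (Filter.Eventually.of_forall fun x => le_max_right _ _)
    (hprodint.mul_const _) (Filter.Eventually.of_forall hpt)) ?_
  rw [MeasureTheory.integral_mul_const, hprodval]
  have hpow : (∫ y, f y ∂Qm l (N+1))^M ≤ (1 + 1/((N:ℝ)+1))^M :=
    pow_le_pow_left₀ hf0 hfle M
  rw [mul_comm (Real.exp (-(s * θ)) / (s * Real.exp 1))]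
  exact mul_le_mul_of_nonneg_right hpow hnn

lemma max_vcgL_integrable (hl : 0 < l) (i : Fin (N+1)) (θ : ℝ) :
    Integrable (fun x => max (vcgL x i - θ) 0) (Pm l (N+1) M) := by
  haveI := Qm_isProb (n := N+1) hl
  set s : ℝ := ((N:ℝ)+1)*l/2 with hs_def
  have hs : 0 < s := by positivity
  set f : (Fin (N+1) → ℝ) → ℝ :=
    fun y => Real.exp (s * (if ∀ i', y i ≤ y i' then y i else 0)) with hf_def
  obtain ⟨hfint, hf0, hfle⟩ := col_mgf_integral hl i
  obtain ⟨hprodint, _⟩ := integral_pi_pow (Qm l (N+1)) M f hfint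
  rw [← Pm_def] at hprodint
  refine Integrable.mono' (hprodint.mul_const (Real.exp (-(s*θ)) / (s * Real.exp 1)))
    ?_ ?_
  · exact (((measurable_vcgL i).sub measurable_const).max measurable_const).aestronglyMeasurable
  · refine Filter.Eventually.of_forall fun x => ?_
    rw [Real.norm_eq_abs, abs_of_nonneg (le_max_right _ _)]
    have h1 := posPart_le_exp' (v := vcgL x i) (θ := θ) hs
    rw [exp_vcgL] at h1
    exact h1

lemma vcg_integral_bound (hl : 0 < l) (hM : 0 < M) (θ : ℝ) :
    ∫ x, VCGms (fun i j => x j i) ∂(Pm l (N+1) M)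
      ≤ θ + ((N:ℝ)+1) * (Real.exp (-((((N:ℝ)+1)*l/2) * θ)) / ((((N:ℝ)+1)*l/2) * Real.exp 1)
          * (1 + 1/((N:ℝ)+1))^M) := by
  haveI := Pm_isProb (n := N+1) (m := M) hl
  have hn1 : 0 < N+1 := Nat.succ_pos N
  have hkey : ∫ x, VCGms (fun i j => x j i) ∂(Pm l (N+1) M)
      ≤ ∫ x, (θ + ∑ i : Fin (N+1), max (vcgL x i - θ) 0) ∂(Pm l (N+1) M) := by
    refine integral_mono_of_nonneg ?_ ?_ ?_
    · filter_upwards [Pm_ae_nonneg hl] with x hx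
      exact vcg_nonneg hn1 hx
    · exact (integrable_const θ).add (integrable_finset_sum _
        (fun i _ => max_vcgL_integrable hl i θ))
    · exact Filter.Eventually.of_forall fun x => vcg_le_decomp hn1 x θ
  refine le_trans hkey ?_
  rw [integral_add (integrable_const θ) (integrable_finset_sum _
    (fun i _ => max_vcgL_integrable hl i θ)), integral_const]
  simp only [measure_univ, probReal_univ, ENNReal.toReal_one, smul_eq_mul, one_mul]
  refine add_le_add_right ?_ θ
  rw [integral_finset_sum _ (fun i _ => max_vcgL_integrable hl i θ)]
  calc ∑ i : Fin (N+1), ∫ x, max (vcgL x i - θ) 0 ∂(Pm l (N+1) M)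
      ≤ ∑ _i : Fin (N+1), Real.exp (-((((N:ℝ)+1)*l/2) * θ)) / ((((N:ℝ)+1)*l/2) * Real.exp 1)
          * (1 + 1/((N:ℝ)+1))^M :=
        Finset.sum_le_sum fun i _ => vcg_chernoff hl i θ
    _ = ((N:ℝ)+1) * (Real.exp (-((((N:ℝ)+1)*l/2) * θ)) / ((((N:ℝ)+1)*l/2) * Real.exp 1)
          * (1 + 1/((N:ℝ)+1))^M) := by
        rw [Finset.sum_const, Finset.card_univ, Fintype.card_fin]
        push_cast
        ring

end Mat4



section Mat5
variable {l : ℝ} {n m : ℕ}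

lemma measurable_opt (hn : 0 < n) (hm : 0 < m) :
    Measurable (fun x : Fin m → Fin n → ℝ => OPTms (fun i j => x j i)) := by
  haveI : Nonempty (Fin n) := ⟨⟨0, hn⟩⟩
  haveI : Nonempty (Fin m) := ⟨⟨0, hm⟩⟩
  have : (fun x : Fin m → Fin n → ℝ => OPTms (fun i j => x j i))
      = fun x => ⨅ σ : Fin m → Fin n, ⨆ i, loadOf x σ i := by
    funext x
    rw [OPTms]
    congr 1
  rw [this]
  refine measurable_ciInf_fintype _ fun σ => ?_
  refine measurable_ciSup_fin _ fun i => ?_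
  exact Finset.measurable_sum _ fun j _ => measurable_coord j i

lemma opt_integrable (hl : 0 < l) (hn : 0 < n) (hm : 0 < m) :
    Integrable (fun x : Fin m → Fin n → ℝ => OPTms (fun i j => x j i)) (Pm l n m) := by
  refine Integrable.mono' (integrable_finset_sum Finset.univ
    (fun j _ => Xmin_integrable hl hn j)) (measurable_opt hn hm).aestronglyMeasurable ?_
  filter_upwards [Pm_ae_nonneg hl] with x hx
  rw [Real.norm_eq_abs, abs_of_nonneg (opt_nonneg hn hx)]
  exact opt_le_summin hn hx

lemma opt_avg_bound (hl : 0 < l) (hn : 0 < n) (hm : 0 < m) :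
    (m:ℝ)/((n:ℝ)*((n:ℝ)*l)) ≤ ∫ x, OPTms (fun i j => x j i) ∂(Pm l n m) := by
  haveI : Nonempty (Fin n) := ⟨⟨0, hn⟩⟩
  have hι := opt_integrable hl hn hm
  have h1 : ∫ x, (∑ j : Fin m, ⨅ i, x j i) ∂(Pm l n m) = (m:ℝ)/((n:ℝ)*l) := by
    rw [integral_finset_sum _ (fun j _ => Xmin_integrable hl hn j)]
    rw [Finset.sum_congr rfl (fun j _ => Xmin_integral hl hn j), Finset.sum_const,
      Finset.card_univ, Fintype.card_fin]
    simp [div_eq_mul_inv]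
  have h2 : ∫ x, (∑ j : Fin m, ⨅ i, x j i) ∂(Pm l n m)
      ≤ ∫ x, (n:ℝ) * OPTms (fun i j => x j i) ∂(Pm l n m) := by
    refine integral_mono_of_nonneg ?_ (hι.const_mul _) ?_
    · filter_upwards [Pm_ae_nonneg hl] with x hx
      exact Finset.sum_nonneg fun j _ => le_ciInf fun i => hx j i
    · exact Filter.Eventually.of_forall fun x => avg_le_opt hn x
  rw [MeasureTheory.integral_const_mul, h1] at h2
  have hnpos : (0:ℝ) < n := by exact_mod_cast hn
  rw [div_le_iff₀ (by positivity : (0:ℝ) < (n:ℝ)*((n:ℝ)*l))]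
  rw [div_le_iff₀ (by positivity : (0:ℝ) < (n:ℝ)*l)] at h2
  nlinarith

lemma opt_max_bound (hl : 0 < l) (hn : 0 < n) (hnm : n ≤ m) :
    (∑ k ∈ Finset.range n, 1/((k:ℝ)+1))/((n:ℝ)*l)
      ≤ ∫ x, OPTms (fun i j => x j i) ∂(Pm l n m) := by
  have hm : 0 < m := lt_of_lt_of_le hn hnm
  refine le_trans (Mmax_integral_ge hl hnm hn) ?_
  refine integral_mono_of_nonneg (ae_Mmax_nonneg hl hn hm) (opt_integrable hl hn hm) ?_
  filter_upwards [Pm_ae_nonneg hl] with x hx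
  haveI : Nonempty (Fin m) := ⟨⟨0, hm⟩⟩
  exact ciSup_le fun j => min_le_opt hn hx j

end Mat5

section Law
variable {n m : ℕ} {l : ℝ} {Ω : Type} [MeasurableSpace Ω]

lemma matrix_law (hl : 0 < l) (μ : Measure Ω) [IsProbabilityMeasure μ]
    (t : Fin n → Fin m → Ω → ℝ) (hmeas : ∀ i j, Measurable (t i j))
    (hindep : iIndepFun (fun p : Fin n × Fin m => t p.1 p.2) μ)
    (hlaw : ∀ i j, μ.map (t i j) = ProbabilityTheory.expMeasure l) :
    μ.map (fun ω => fun (j : Fin m) (i : Fin n) => t i j ω) = Pm l n m := by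
  haveI := expMeasure_isProb hl
  haveI := Qm_isProb (n := n) hl
  have hT : Measurable (fun ω => fun (j : Fin m) (i : Fin n) => t i j ω) :=
    measurable_pi_lambda _ fun j => measurable_pi_lambda _ fun i => hmeas i j
  rw [Pm]
  refine (Measure.pi_eq_generateFrom (C := fun _ : Fin m =>
      Set.pi Set.univ '' Set.pi Set.univ (fun _ : Fin n => {s : Set ℝ | MeasurableSet s}))
    (fun _ => generateFrom_pi) (fun _ => isPiSystem_pi) (fun _ => ?_) ?_).symm
  · exact ⟨fun _ => Set.univ,
      fun _ => ⟨fun _ => Set.univ, fun i _ => (MeasurableSet.univ : MeasurableSet (Set.univ : Set ℝ)), by simp⟩,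
      fun _ => measure_lt_top _ _, by rw [Set.iUnion_const]⟩
  · intro S hS
    have hex : ∀ j, ∃ A : Fin n → Set ℝ,
        (∀ i, MeasurableSet (A i)) ∧ Set.univ.pi A = S j := by
      intro j
      obtain ⟨A, hA1, hA2⟩ := hS j
      exact ⟨A, fun i => hA1 i (Set.mem_univ i), hA2⟩
    choose A hA1 hA2 using hex
    have hSmeas : ∀ j, MeasurableSet (S j) := by
      intro j
      rw [← hA2 j]
      exact MeasurableSet.univ_pi fun i => hA1 j i
    have hpre : (fun ω => fun (j : Fin m) (i : Fin n) => t i j ω) ⁻¹' (Set.univ.pi S)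
        = ⋂ p : Fin n × Fin m, (t p.1 p.2) ⁻¹' (A p.2 p.1) := by
      ext ω
      simp only [Set.mem_preimage, Set.mem_pi, Set.mem_univ, forall_true_left,
        Set.mem_iInter]
      constructor
      · intro h p
        have := h p.2
        rw [← hA2 p.2] at this
        exact this p.1 (Set.mem_univ _)
      · intro h j
        rw [← hA2 j]
        intro i _
        exact h (i, j)
    rw [Measure.map_apply hT (MeasurableSet.univ_pi hSmeas), hpre]
    rw [hindep.meas_iInter (fun p => ⟨A p.2 p.1, hA1 p.2 p.1, rfl⟩)]
    have hfac : ∀ p : Fin n × Fin m, μ ((t p.1 p.2) ⁻¹' (A p.2 p.1))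
        = expMeasure l (A p.2 p.1) := by
      intro p
      rw [← hlaw p.1 p.2, Measure.map_apply (hmeas p.1 p.2) (hA1 p.2 p.1)]
    rw [Finset.prod_congr rfl (fun p _ => hfac p)]
    rw [Fintype.prod_prod_type]
    rw [Finset.prod_comm]
    refine Finset.prod_congr rfl fun j _ => ?_
    rw [← hA2 j, Qm, Measure.pi_pi]

end Law


/-- For `n ≥ 2`, `m ≥ n` and i.i.d. processing times exponentially distributed with
rate `λ > 0`, VCG is `4`-approximate. -/
theorem vcg_iid_exponential_four_approx {n m : ℕ} (hn : 2 ≤ n) (hm : n ≤ m)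
    (l : ℝ) (hl : 0 < l)
    (Ω : Type) [MeasurableSpace Ω] (μ : Measure Ω) [IsProbabilityMeasure μ]
    (t : Fin n → Fin m → Ω → ℝ)
    (hmeas : ∀ i j, Measurable (t i j))
    (hindep : iIndepFun (fun p : Fin n × Fin m => t p.1 p.2) μ)
    (hlaw : ∀ i j, μ.map (t i j) = ProbabilityTheory.expMeasure l) :
    ∫ ω, VCGms (fun i j => t i j ω) ∂μ ≤
      4 * ∫ ω, OPTms (fun i j => t i j ω) ∂μ := by
  obtain ⟨N, rfl⟩ : ∃ N, n = N+1 := ⟨n-1, by omega⟩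
  have hn1 : 0 < N+1 := Nat.succ_pos N
  have hm1 : 0 < m := lt_of_lt_of_le hn1 hm
  haveI := Pm_isProb (n := N+1) (m := m) hl
  haveI : Nonempty (Fin (N+1)) := ⟨0⟩
  have hlawT := matrix_law hl μ t hmeas hindep hlaw
  have hT : Measurable (fun ω => fun (j : Fin m) (i : Fin (N+1)) => t i j ω) :=
    measurable_pi_lambda _ fun j => measurable_pi_lambda _ fun i => hmeas i j
  have hVCGmeas : Measurable (fun x : Fin m → Fin (N+1) → ℝ => VCGms (fun i j => x j i)) := by
    have heq : (fun x : Fin m → Fin (N+1) → ℝ => VCGms (fun i j => x j i))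
        = fun x => ⨆ i, vcgL x i := by
      funext x; rw [vcgms_eq]
    rw [heq]
    exact measurable_ciSup_fin _ fun i => measurable_vcgL i
  have hVCGt : ∫ ω, VCGms (fun i j => t i j ω) ∂μ
      = ∫ x, VCGms (fun i j => x j i) ∂(Pm l (N+1) m) := by
    rw [← hlawT, integral_map hT.aemeasurable hVCGmeas.aestronglyMeasurable]
  have hOPTt : ∫ ω, OPTms (fun i j => t i j ω) ∂μ
      = ∫ x, OPTms (fun i j => x j i) ∂(Pm l (N+1) m) := by
    rw [← hlawT, integral_map hT.aemeasurable (measurable_opt hn1 hm1).aestronglyMeasurable]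
  rw [hVCGt, hOPTt]
  have hopt1 := opt_avg_bound (l := l) (n := N+1) (m := m) hl hn1 hm1
  have hopt2 := opt_max_bound (l := l) (n := N+1) (m := m) hl hn1 hm
  have hharm := harmonic_ge (n := N+1) (by omega)
  push_cast at hopt1 hopt2 hharm
  set ν : ℝ := ((N:ℝ)+1) * l with hν_def
  have hν : 0 < ν := by positivity
  set θ : ℝ := 2/ν * (Real.log ((N:ℝ)+1) + (m:ℝ)/((N:ℝ)+1)) with hθ_def
  have hb := vcg_integral_bound (l := l) (N := N) (M := m) hl hm1 θ
  set s : ℝ := ((N:ℝ)+1)*l/2 with hs_def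
  have hs : 0 < s := by positivity
  have hsν : ν = 2*s := by rw [hν_def, hs_def]; ring
  have hNpos : (0:ℝ) < (N:ℝ)+1 := by positivity
  have htail : ((N:ℝ)+1) * (Real.exp (-(s * θ)) / (s * Real.exp 1)
      * (1 + 1/((N:ℝ)+1))^m) ≤ 2/(ν * Real.exp 1) := by
    have hsθ : s * θ = Real.log ((N:ℝ)+1) + (m:ℝ)/((N:ℝ)+1) := by
      rw [hθ_def, hs_def, hν_def]
      field_simp
    have hexpθ : Real.exp (-(s*θ)) = (1/((N:ℝ)+1)) * Real.exp (-((m:ℝ)/((N:ℝ)+1))) := by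
      rw [hsθ, neg_add, Real.exp_add, Real.exp_neg, Real.exp_log hNpos]
      ring
    have hpow : (1 + 1/((N:ℝ)+1))^m ≤ Real.exp ((m:ℝ)/((N:ℝ)+1)) := by
      have h1 : 1 + 1/((N:ℝ)+1) ≤ Real.exp (1/((N:ℝ)+1)) := by
        have := Real.add_one_le_exp (1/((N:ℝ)+1))
        linarith
      have h2 : (1 + 1/((N:ℝ)+1))^m ≤ (Real.exp (1/((N:ℝ)+1)))^m :=
        pow_le_pow_left₀ (by positivity) h1 m
      rw [← Real.exp_nat_mul] at h2
      have h3 : (m:ℝ) * (1/((N:ℝ)+1)) = (m:ℝ)/((N:ℝ)+1) := by ring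
      rwa [h3] at h2
    have hkey : Real.exp (-((m:ℝ)/((N:ℝ)+1))) * (1 + 1/((N:ℝ)+1))^m ≤ 1 := by
      have h4 := mul_le_mul_of_nonneg_left hpow (Real.exp_pos (-((m:ℝ)/((N:ℝ)+1)))).le
      rw [← Real.exp_add] at h4
      simpa using h4
    have hEq : ((N:ℝ)+1) * ((1/((N:ℝ)+1)) * Real.exp (-((m:ℝ)/((N:ℝ)+1))) / (s * Real.exp 1)
        * (1 + 1/((N:ℝ)+1))^m)
        = (Real.exp (-((m:ℝ)/((N:ℝ)+1))) * (1 + 1/((N:ℝ)+1))^m) / (s * Real.exp 1) := by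
      field_simp
    rw [hexpθ, hEq]
    have h5 : (Real.exp (-((m:ℝ)/((N:ℝ)+1))) * (1 + 1/((N:ℝ)+1))^m) / (s * Real.exp 1)
        ≤ 1 / (s * Real.exp 1) := by
      gcongr
    refine le_trans h5 (le_of_eq ?_)
    rw [hsν]
    field_simp
  refine le_trans hb ?_
  refine le_trans (add_le_add_right htail θ) ?_
  have hfinal : θ + 2/(ν * Real.exp 1)
      ≤ 2*((m:ℝ)/(((N:ℝ)+1) * ν)) + 2*((∑ k ∈ Finset.range (N+1), 1/((k:ℝ)+1))/ν) := by
    have hH : Real.log ((N:ℝ)+1) + (Real.exp 1)⁻¹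
        ≤ ∑ k ∈ Finset.range (N+1), 1/((k:ℝ)+1) := hharm
    have he1 : (0:ℝ) < Real.exp 1 := Real.exp_pos 1
    rw [hθ_def]
    have expand : 2/ν * (Real.log ((N:ℝ)+1) + (m:ℝ)/((N:ℝ)+1)) + 2/(ν * Real.exp 1)
        = (2*Real.log ((N:ℝ)+1) + 2*(Real.exp 1)⁻¹)/ν + 2*((m:ℝ)/(((N:ℝ)+1)*ν)) := by
      field_simp
      ring
    rw [expand]
    have hstep : (2*Real.log ((N:ℝ)+1) + 2*(Real.exp 1)⁻¹)/ν
        ≤ (2*(∑ k ∈ Finset.range (N+1), 1/((k:ℝ)+1)))/ν := by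
      gcongr
      linarith
    have hrw : (2*(∑ k ∈ Finset.range (N+1), 1/((k:ℝ)+1)))/ν
        = 2*((∑ k ∈ Finset.range (N+1), 1/((k:ℝ)+1))/ν) := by ring
    rw [hrw] at hstep
    linarith
  refine le_trans hfinal ?_
  have hcast1 : (m:ℝ)/(((N:ℝ)+1) * ν) ≤ ∫ x, OPTms (fun i j => x j i) ∂(Pm l (N+1) m) := by
    have : ((N:ℝ)+1) * ν = ((N:ℝ)+1) * (((N:ℝ)+1) * l) := by rw [hν_def]
    rw [this]
    exact hopt1
  have hcast2 : (∑ k ∈ Finset.range (N+1), 1/((k:ℝ)+1))/ν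
      ≤ ∫ x, OPTms (fun i j => x j i) ∂(Pm l (N+1) m) := by
    rw [hν_def]
    exact hopt2
  linarith
end

section
/- Let n ≥ 2, let m ≥ n be a multiple of n, and let ε ∈ (0,1). Consider the deterministic processing-time matrix where t_{1j} = 1 − ε for all tasks j ∈ [m] and t_{ij} = 1 for all machines i ∈ {2,…,n} and all tasks j ∈ [m] (so the execution times are identical across tasks but not across machines). Then the VCG mechanism allocates every task to machine 1 and achieves makespan m·(1 − ε), while the optimal makespan is at most m/n; hence VCG(t)/OPT(t) ≥ n·(1 − ε). -/
open MeasureTheory ProbabilityTheory Finset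

/-- On the deterministic instance where machine `0` has processing time `1 - ε` on every
task and every other machine has processing time `1`, VCG allocates all tasks to
machine `0` for a makespan of `m(1-ε)`, while `OPT ≤ m/n`; hence the ratio is at least
`n(1-ε)`. -/
theorem vcg_n_approx_non_identical_machines (n m : ℕ) (hn : 2 ≤ n) (hm : n ≤ m)
    (hdvd : n ∣ m) (ε : ℝ) (hε0 : 0 < ε) (hε1 : ε < 1) :
    ∀ t : Fin n → Fin m → ℝ,
      (t = fun i _ => if i = (⟨0, by omega⟩ : Fin n) then 1 - ε else 1) →
      (∀ j i', t ⟨0, by omega⟩ j ≤ t i' j) ∧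
      VCGms t = (m : ℝ) * (1 - ε) ∧
      OPTms t ≤ (m : ℝ) / n ∧
      (n : ℝ) * (1 - ε) ≤ VCGms t / OPTms t := by
  intro t ht
  have hn0 : (0:ℝ) < n := by positivity
  have hm0 : (0:ℝ) < m := by
    have : 0 < m := by omega
    exact_mod_cast this
  have hε' : (0:ℝ) < 1 - ε := by linarith
  set i0 : Fin n := ⟨0, by omega⟩ with hi0
  haveI : Nonempty (Fin n) := ⟨i0⟩
  -- basic facts about t
  have ht0 : ∀ j, t i0 j = 1 - ε := by intro j; simp [ht]
  have ht1 : ∀ i j, i ≠ i0 → t i j = 1 := by intro i j hi; simp [ht, hi]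
  have htle : ∀ i j, t i j ≤ 1 := by
    intro i j
    by_cases hi : i = i0
    · rw [hi, ht0]; linarith
    · rw [ht1 i j hi]
  have htge : ∀ i j, 1 - ε ≤ t i j := by
    intro i j
    by_cases hi : i = i0
    · rw [hi, ht0]
    · rw [ht1 i j hi]; linarith
  have htpos : ∀ i j, 0 ≤ t i j := fun i j => le_trans (le_of_lt hε') (htge i j)
  have hle : ∀ (j : Fin m) (i' : Fin n), t i0 j ≤ t i' j := by
    intro j i'; rw [ht0]; exact htge i' j
  -- VCG value
  have hVCG : VCGms t = (m : ℝ) * (1 - ε) := by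
    unfold VCGms
    have hfun : ∀ i : Fin n,
        (∑ j : Fin m, if ∀ i', t i j ≤ t i' j then t i j else 0)
          = if i = i0 then (m : ℝ) * (1 - ε) else 0 := by
      intro i
      by_cases hi : i = i0
      · subst hi
        simp only [if_pos rfl]
        rw [Finset.sum_congr rfl (fun j _ => if_pos (hle j))]
        simp [ht0, mul_comm]; ring
      · simp only [if_neg hi]
        rw [Finset.sum_congr rfl (fun j _ => ?_), Finset.sum_const_zero]
        rw [if_neg]
        intro h
        have := h i0
        rw [ht0, ht1 i j hi] at this
        linarith
    apply le_antisymm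
    · apply ciSup_le
      intro i
      rw [hfun i]
      split
      · exact le_refl _
      · positivity
    · have := le_ciSup (f := fun i : Fin n =>
        ∑ j : Fin m, if ∀ i', t i j ≤ t i' j then t i j else 0)
        (Set.Finite.bddAbove (Set.finite_range _)) i0
      rw [hfun i0, if_pos rfl] at this
      exact this
  -- every makespan is at least 1 - ε
  have hms_lb : ∀ σ : Fin m → Fin n, 1 - ε ≤ makespan t σ := by
    intro σ
    unfold makespan
    set j0 : Fin m := ⟨0, by omega⟩
    set i1 : Fin n := σ j0
    have hmem : j0 ∈ Finset.univ.filter (fun j => σ j = i1) := by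
      simp [j0, i1]
    have h1 : 1 - ε ≤ ∑ j ∈ Finset.univ.filter (fun j => σ j = i1), t i1 j := by
      calc 1 - ε ≤ t i1 j0 := htge i1 j0
        _ ≤ _ := Finset.single_le_sum (fun j _ => htpos i1 j) hmem
    exact le_trans h1 (le_ciSup
      (f := fun i => ∑ j ∈ Finset.univ.filter (fun j => σ j = i), t i j)
      (Set.Finite.bddAbove (Set.finite_range _)) i1)
  have hms_nonneg : ∀ σ : Fin m → Fin n, 0 ≤ makespan t σ :=
    fun σ => le_trans (by linarith) (hms_lb σ)
  -- OPT upper bound via round-robin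
  have hOPT_ub : OPTms t ≤ (m : ℝ) / n := by
    set σ0 : Fin m → Fin n := fun j => ⟨j.val % n, Nat.mod_lt _ (by omega)⟩ with hσ0
    have hcard : ∀ i : Fin n,
        (Finset.univ.filter (fun j => σ0 j = i)).card ≤ m / n := by
      intro i
      have : (Finset.univ.filter (fun j : Fin m => σ0 j = i)).card
          ≤ (Finset.univ : Finset (Fin (m / n))).card := by
        apply Finset.card_le_card_of_injOn
            (fun j => ⟨j.val / n, by
              apply Nat.div_lt_div_of_lt_of_dvd hdvd
              exact j.isLt⟩)
        · intro j _; exact Finset.mem_univ _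
        · intro j1 h1 j2 h2 h12
          simp only [Finset.mem_coe, Finset.mem_filter, hσ0] at h1 h2
          have e1 : j1.val % n = i.val := congrArg Fin.val h1.2
          have e2 : j2.val % n = i.val := congrArg Fin.val h2.2
          have e3 : j1.val / n = j2.val / n := congrArg Fin.val h12
          have : j1.val = j2.val := by
            rw [← Nat.mod_add_div j1.val n, ← Nat.mod_add_div j2.val n, e1, e2, e3]
          exact Fin.ext this
      simpa using this
    have hms : makespan t σ0 ≤ (m : ℝ) / n := by
      unfold makespan
      apply ciSup_le
      intro i
      calc ∑ j ∈ Finset.univ.filter (fun j => σ0 j = i), t i j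
          ≤ ∑ _j ∈ Finset.univ.filter (fun j => σ0 j = i), (1:ℝ) :=
            Finset.sum_le_sum (fun j _ => htle i j)
        _ = ((Finset.univ.filter (fun j => σ0 j = i)).card : ℝ) := by simp
        _ ≤ ((m / n : ℕ) : ℝ) := by exact_mod_cast hcard i
        _ ≤ (m : ℝ) / n := Nat.cast_div_le
    refine le_trans (ciInf_le ?_ σ0) hms
    exact ⟨0, fun x ⟨σ, hσ⟩ => hσ ▸ hms_nonneg σ⟩
  -- OPT lower bound
  have hOPT_lb : 1 - ε ≤ OPTms t := le_ciInf hms_lb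
  have hOPT_pos : 0 < OPTms t := lt_of_lt_of_le hε' hOPT_lb
  refine ⟨hle, hVCG, hOPT_ub, ?_⟩
  rw [hVCG, le_div_iff₀ hOPT_pos]
  have h1 : (n : ℝ) * (1 - ε) * OPTms t ≤ (n : ℝ) * (1 - ε) * ((m : ℝ) / n) := by
    apply mul_le_mul_of_nonneg_left hOPT_ub
    positivity
  have h2 : (n : ℝ) * (1 - ε) * ((m : ℝ) / n) = (m : ℝ) * (1 - ε) := by
    field_simp
  linarith
end

section
/- Let X be a continuous nonnegative random variable with monotone hazard rate (MHR) and finite moments of all orders. Then for every positive integer r, E[X^r] ≤ r! · (E[X])^r. -/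
open MeasureTheory ProbabilityTheory Finset
open scoped ENNReal NNReal

open Set in
lemma layercake_pow (ν : Measure ℝ) {r : ℕ} (hr : 0 < r) :
    ∫⁻ x in Ioi 0, ENNReal.ofReal (x ^ r) ∂ν
      = ∫⁻ t in Ioi 0, ν (Ici t) * ENNReal.ofReal (r * t ^ (r - 1)) := by
  have h := lintegral_comp_eq_lintegral_meas_le_mul (f := id)
      (g := fun t => (r : ℝ) * t ^ (r - 1)) (ν.restrict (Ioi 0))
      ((ae_restrict_iff' measurableSet_Ioi).2 (ae_of_all _ fun x hx => le_of_lt hx))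
      aemeasurable_id
      (fun t _ => (Continuous.intervalIntegrable (by continuity) 0 t))
      ((ae_restrict_iff' measurableSet_Ioi).2 (ae_of_all _ fun t ht =>
        mul_nonneg (Nat.cast_nonneg r) (pow_nonneg (le_of_lt ht) _)))
  rw [show (∫⁻ x in Ioi 0, ENNReal.ofReal (x ^ r) ∂ν)
      = ∫⁻ x, ENNReal.ofReal (∫ t in (0:ℝ)..(id x), (r:ℝ) * t ^ (r-1)) ∂(ν.restrict (Ioi 0)) from ?_, h]
  · refine setLIntegral_congr_fun measurableSet_Ioi (fun t ht => ?_)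
    rw [Measure.restrict_apply (measurableSet_le measurable_const measurable_id)]
    have hset : {a : ℝ | t ≤ id a} ∩ Ioi 0 = Ici t := by
      ext x
      simp only [mem_setOf_eq, id, mem_inter_iff, Set.mem_Ici, Set.mem_Ioi]
      exact ⟨fun ⟨h1, _⟩ => h1, fun h1 => ⟨h1, lt_of_lt_of_le ht h1⟩⟩
    rw [hset]
  · refine lintegral_congr fun x => ?_
    congr 1
    rw [intervalIntegral.integral_const_mul, integral_pow]
    have h1 : r - 1 + 1 = r := Nat.succ_pred_eq_of_pos hr
    rw [h1]
    have : (r : ℝ) ≠ 0 := Nat.cast_ne_zero.2 hr.ne'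
    field_simp
    have h2 : ((r - 1 : ℕ) : ℝ) + 1 = r := by exact_mod_cast h1
    simp only [id, h2, zero_pow hr.ne', sub_zero]
    ring


open Set in
/-- Moment bound for continuous MHR random variables: if `X ≥ 0` is continuous MHR
with finite moments of all orders, then `E[X^r] ≤ r! · (E[X])^r` for every positive
integer `r`. -/
theorem mhr_moment_bound (D : Measure ℝ) [IsProbabilityMeasure D]
    (hsupp : D (Set.Iio 0) = 0)
    (hmhr : IsMHR D)
    (hmom : ∀ r : ℕ, Integrable (fun x : ℝ => x ^ r) D) :
    ∀ r : ℕ, 0 < r → ∫ x, x ^ r ∂D ≤ (r.factorial : ℝ) * (∫ x, x ∂D) ^ r := by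
  obtain ⟨f, hfm, hfnn, hD, hcross⟩ := hmhr
  set g : ℝ → ℝ≥0∞ := fun x => ENNReal.ofReal (f x) with hgdef
  have hgm : Measurable g := ENNReal.measurable_ofReal.comp hfm
  set G : ℝ → ℝ≥0∞ := fun t => D (Ioi t) with hGdef
  have hGanti : Antitone G := fun a b hab => measure_mono (Ioi_subset_Ioi hab)
  have hGm : Measurable G := hGanti.measurable
  have hpow : ∀ k : ℕ, Measurable fun t : ℝ => ENNReal.ofReal (t ^ k) :=
    fun k => Measurable.ennreal_ofReal (by measurability)
  have hpm : ∀ k : ℕ, Measurable fun t : ℝ => G t * ENNReal.ofReal (t ^ k) :=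
    fun k => hGm.mul (hpow k)
  have hDs : ∀ s : Set ℝ, MeasurableSet s → D s = ∫⁻ x in s, g x := by
    intro s hs; rw [hD, withDensity_apply _ hs]
  have habs : D ≪ volume := hD ▸ withDensity_absolutelyContinuous volume _
  haveI : NullSingletonClass D := ⟨fun x => habs (measure_singleton x)⟩
  have hIci : ∀ t : ℝ, D (Ici t) = G t := fun t => (measure_congr Ioi_ae_eq_Ici).symm
  have hG0 : G 0 = 1 := by
    rw [← hIci]
    have h1 := measure_add_measure_compl (μ := D) (measurableSet_Ici (a := (0:ℝ)))
    rw [measure_univ, compl_Ici, hsupp, add_zero] at h1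
    exact h1
  -- MHR cross inequality in ℝ≥0∞
  have key : ∀ u y : ℝ, u ≤ y → g u * G y ≤ g y * G u := by
    intro u y huy
    by_cases hy : G y = 0
    · simp [hy]
    · have hu : G u ≠ 0 := fun h0 => hy (le_antisymm (h0 ▸ hGanti huy) (zero_le))
      have h := hcross huy hu hy
      have hfy : G y = ENNReal.ofReal (G y).toReal := (ENNReal.ofReal_toReal (measure_ne_top D _)).symm
      have hfu : G u = ENNReal.ofReal (G u).toReal := (ENNReal.ofReal_toReal (measure_ne_top D _)).symm
      rw [hgdef]
      calc ENNReal.ofReal (f u) * G y = ENNReal.ofReal (f u * (G y).toReal) := by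
            rw [ENNReal.ofReal_mul (hfnn u), ENNReal.ofReal_toReal (measure_ne_top D _)]
        _ ≤ ENNReal.ofReal (f y * (G u).toReal) := ENNReal.ofReal_le_ofReal h
        _ = ENNReal.ofReal (f y) * G u := by
            rw [ENNReal.ofReal_mul (hfnn y), ENNReal.ofReal_toReal (measure_ne_top D _)]
  set M : ℝ → ℝ≥0∞ := fun s => ∫⁻ y in Ioi s, G y with hMdef
  have hgIoi : ∀ s : ℝ, ∫⁻ y in Ioi s, g y = G s := fun s => (hDs _ measurableSet_Ioi).symm
  have step1 : ∀ u s : ℝ, u ≤ s → g u * M s ≤ G s * G u := by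
    intro u s hus
    calc g u * M s = ∫⁻ y in Ioi s, g u * G y := (lintegral_const_mul _ hGm).symm
      _ ≤ ∫⁻ y in Ioi s, g y * G u := by
          refine lintegral_mono_ae ((ae_restrict_iff' measurableSet_Ioi).2
            (ae_of_all _ fun y hy => ?_))
          exact key u y (hus.trans (le_of_lt hy))
      _ = (∫⁻ y in Ioi s, g y) * G u := lintegral_mul_const _ hgm
      _ = G s * G u := by rw [hgIoi, mul_comm]
  have nbue : ∀ s : ℝ, 0 ≤ s → M s ≤ G s * M 0 := by
    intro s hs
    have hdisj : Disjoint (Set.Ioc (0:ℝ) s) (Set.Ioi s) := Set.Ioc_disjoint_Ioi le_rfl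
    have huni : Set.Ioc (0:ℝ) s ∪ Set.Ioi s = Set.Ioi 0 := Set.Ioc_union_Ioi_eq_Ioi hs
    have hsplit : M 0 = (∫⁻ u in Ioc 0 s, G u) + M s := by
      rw [hMdef]
      simp only
      rw [← huni, lintegral_union measurableSet_Ioi hdisj]
    have hone : D (Ioc 0 s) + G s = 1 := by
      rw [hGdef]
      simp only
      rw [← measure_union hdisj measurableSet_Ioi, huni]
      exact hG0
    calc M s = M s * (D (Ioc 0 s) + G s) := by rw [hone, mul_one]
      _ = M s * D (Ioc 0 s) + M s * G s := mul_add _ _ _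
      _ ≤ G s * (∫⁻ u in Ioc 0 s, G u) + G s * M s := by
          gcongr ?_ + ?_
          · calc M s * D (Ioc 0 s) = M s * ∫⁻ u in Ioc 0 s, g u := by
                  rw [← hDs _ measurableSet_Ioc]
              _ = ∫⁻ u in Ioc 0 s, M s * g u := (lintegral_const_mul _ hgm).symm
              _ ≤ ∫⁻ u in Ioc 0 s, G s * G u := by
                  refine lintegral_mono_ae ((ae_restrict_iff' measurableSet_Ioc).2
                    (ae_of_all _ fun u hu => ?_))
                  rw [mul_comm]
                  exact step1 u s hu.2
              _ = G s * ∫⁻ u in Ioc 0 s, G u := lintegral_const_mul _ hGm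
          · rw [mul_comm]
      _ = G s * ((∫⁻ u in Ioc 0 s, G u) + M s) := (mul_add _ _ _).symm
      _ = G s * M 0 := by rw [← hsplit]
  -- the moments in ℝ≥0∞
  set I : ℕ → ℝ≥0∞ := fun k => ∫⁻ t in Ioi 0, G t * ENNReal.ofReal (t ^ k) with hIdef
  set J : ℕ → ℝ≥0∞ := fun r => ∫⁻ x in Ioi 0, ENNReal.ofReal (x ^ r) ∂D with hJdef
  have hJI : ∀ r : ℕ, 0 < r → J r = r * I (r - 1) := by
    intro r hr
    rw [hJdef]
    simp only
    rw [layercake_pow D hr]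
    have : ∀ t ∈ Ioi (0:ℝ), D (Ici t) * ENNReal.ofReal (r * t ^ (r-1))
        = (r : ℝ≥0∞) * (G t * ENNReal.ofReal (t ^ (r-1))) := by
      intro t _
      rw [hIci, ENNReal.ofReal_mul (Nat.cast_nonneg r), ENNReal.ofReal_natCast]
      ring
    rw [setLIntegral_congr_fun measurableSet_Ioi this,
      lintegral_const_mul _ (hpm (r - 1))]
  set ν : Measure ℝ := volume.withDensity G with hνdef
  have hνIci : ∀ t : ℝ, ν (Ici t) = M t := by
    intro t
    rw [hνdef, withDensity_apply _ measurableSet_Ici, ← restrict_Ioi_eq_restrict_Ici]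
  have hrec : ∀ k : ℕ, 0 < k → I k ≤ (k : ℝ≥0∞) * M 0 * I (k - 1) := by
    intro k hk
    have hIν : I k = ∫⁻ x in Ioi 0, ENNReal.ofReal (x ^ k) ∂ν := by
      rw [hνdef, restrict_withDensity measurableSet_Ioi,
        lintegral_withDensity_eq_lintegral_mul _ hGm (hpow k)]
      rfl
    rw [hIν, layercake_pow ν hk]
    calc ∫⁻ t in Ioi 0, ν (Ici t) * ENNReal.ofReal (k * t ^ (k-1))
        ≤ ∫⁻ t in Ioi 0, (G t * M 0) * ENNReal.ofReal (k * t ^ (k-1)) := by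
          refine lintegral_mono_ae ((ae_restrict_iff' measurableSet_Ioi).2
            (ae_of_all _ fun t ht => ?_))
          rw [hνIci]
          exact mul_le_mul_left (nbue t (le_of_lt ht)) _
      _ = ∫⁻ t in Ioi 0, (k : ℝ≥0∞) * M 0 * (G t * ENNReal.ofReal (t ^ (k-1))) := by
          refine setLIntegral_congr_fun measurableSet_Ioi (fun t _ => ?_)
          rw [ENNReal.ofReal_mul (Nat.cast_nonneg k), ENNReal.ofReal_natCast]
          ring
      _ = (k : ℝ≥0∞) * M 0 * I (k - 1) := by
          rw [lintegral_const_mul _ (hpm (k - 1))]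
  have hI0 : I 0 = M 0 := by
    rw [hIdef, hMdef]
    simp
  have hind : ∀ k : ℕ, I k ≤ (k.factorial : ℝ≥0∞) * M 0 ^ (k + 1) := by
    intro k
    induction k with
    | zero => simp [hI0]
    | succ k ih =>
        calc I (k + 1) ≤ ((k+1 : ℕ) : ℝ≥0∞) * M 0 * I k :=
              hrec (k+1) (Nat.succ_pos k)
          _ ≤ ((k+1 : ℕ) : ℝ≥0∞) * M 0 * ((k.factorial : ℝ≥0∞) * M 0 ^ (k + 1)) := by
              gcongr
          _ = ((k+1).factorial : ℝ≥0∞) * M 0 ^ (k + 2) := by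
              rw [Nat.factorial_succ, Nat.cast_mul]
              ring
  -- conversion to real integrals
  have hDIic : D (Iic 0) = 0 := by
    rw [← Iio_union_right]
    exact measure_union_null hsupp (measure_singleton 0)
  have hDres : D.restrict (Ioi 0) = D := by
    rw [Measure.restrict_eq_self_of_ae_mem]
    refine (ae_iff.2 ?_)
    convert hDIic using 2
    ext x
    simp
  have hint : ∀ r : ℕ, ∫ x, x ^ r ∂D = (J r).toReal := by
    intro r
    calc ∫ x, x ^ r ∂D = ∫ x, x ^ r ∂(D.restrict (Ioi 0)) := by rw [hDres]
      _ = (∫⁻ x, ENNReal.ofReal (x ^ r) ∂(D.restrict (Ioi 0))).toReal :=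
          integral_eq_lintegral_of_nonneg_ae
            ((ae_restrict_iff' measurableSet_Ioi).2
              (ae_of_all _ fun x hx => pow_nonneg (le_of_lt hx) r))
            ((measurable_id.pow_const r).aestronglyMeasurable)
      _ = (J r).toReal := rfl
  have hJfin : ∀ r : ℕ, J r ≠ ⊤ := by
    intro r
    have hb : J r ≤ ∫⁻ x, (‖x ^ r‖₊ : ℝ≥0∞) ∂D := by
      rw [hJdef]
      refine le_trans (setLIntegral_le_lintegral _ _) (lintegral_mono fun x => ?_)
      rw [← enorm_eq_nnnorm, Real.enorm_eq_ofReal_abs]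
      exact ENNReal.ofReal_le_ofReal (le_abs_self _)
    exact ne_top_of_le_ne_top (hmom r).2.ne hb
  have hM0J : M 0 = J 1 := by
    rw [hJI 1 one_pos]
    simp [hI0]
  have hM0fin : M 0 ≠ ⊤ := hM0J ▸ hJfin 1
  have hmean : ∫ x, x ∂D = (J 1).toReal := by
    have := hint 1
    simpa using this
  have hM0eq : M 0 = ENNReal.ofReal (∫ x, x ∂D) := by
    rw [hmean, ENNReal.ofReal_toReal (hJfin 1), hM0J]
  intro r hr
  have hm_nn : 0 ≤ ∫ x, x ∂D := by
    rw [hmean]; exact ENNReal.toReal_nonneg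
  have hJr : J r ≤ ENNReal.ofReal ((r.factorial : ℝ) * (∫ x, x ∂D) ^ r) := by
    calc J r = (r : ℝ≥0∞) * I (r - 1) := hJI r hr
      _ ≤ (r : ℝ≥0∞) * (((r-1).factorial : ℝ≥0∞) * M 0 ^ (r - 1 + 1)) := by
          gcongr
          exact hind (r - 1)
      _ = ((r : ℝ≥0∞) * ((r-1).factorial : ℝ≥0∞)) * M 0 ^ r := by
          rw [Nat.sub_add_cancel hr]; ring
      _ = (r.factorial : ℝ≥0∞) * M 0 ^ r := by
          rw [← Nat.cast_mul, Nat.mul_factorial_pred hr.ne']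
      _ = ENNReal.ofReal ((r.factorial : ℝ) * (∫ x, x ∂D) ^ r) := by
          rw [hM0eq, ENNReal.ofReal_mul (Nat.cast_nonneg _), ENNReal.ofReal_pow hm_nn,
            ENNReal.ofReal_natCast]
  rw [hint r]
  calc (J r).toReal ≤ (ENNReal.ofReal ((r.factorial : ℝ) * (∫ x, x ∂D) ^ r)).toReal :=
        ENNReal.toReal_mono ENNReal.ofReal_ne_top hJr
    _ = (r.factorial : ℝ) * (∫ x, x ∂D) ^ r := ENNReal.toReal_ofReal
        (mul_nonneg (Nat.cast_nonneg _) (pow_nonneg hm_nn r))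
end

section
/- For every ε ∈ (0, 1/2), the discrete random variable X with P(X = 0) = 1/2 + ε and P(X = 1) = 1/2 − ε has a monotone (nondecreasing) hazard rate, yet it satisfies E[X²] > 2·(E[X])². Hence the moment inequality E[X^r] ≤ r!·(E[X])^r for MHR random variables fails for discrete MHR distributions. -/
open MeasureTheory ProbabilityTheory Finset

private theorem intdirac_aux (f : ℝ → ℝ) (hf : Measurable f) (a b : ENNReal)
    (ha : a ≠ ⊤) (hb : b ≠ ⊤) :
    ∫ x, f x ∂(a • Measure.dirac (0:ℝ) + b • Measure.dirac (1:ℝ))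
      = a.toReal * f 0 + b.toReal * f 1 := by
  have h0 : Integrable f (Measure.dirac (0:ℝ)) :=
    (integrable_const (f 0)).congr (ae_eq_dirac' hf).symm
  have h1 : Integrable f (Measure.dirac (1:ℝ)) :=
    (integrable_const (f 1)).congr (ae_eq_dirac' hf).symm
  rw [integral_add_measure (h0.smul_measure ha) (h1.smul_measure hb),
    integral_smul_measure, integral_smul_measure, integral_dirac, integral_dirac,
    smul_eq_mul, smul_eq_mul]

/-- The discrete random variable with `P(X = 0) = 1/2 + ε` and `P(X = 1) = 1/2 - ε`
has nondecreasing hazard rate, yet `E[X²] > 2 (E[X])²`; so the MHR moment inequality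
`E[X^r] ≤ r! (E[X])^r` fails for discrete MHR distributions. -/
theorem discrete_mhr_moment_counterexample (ε : ℝ) (hε0 : 0 < ε) (hε1 : ε < 1 / 2) :
    ∀ D : Measure ℝ,
      (D = ENNReal.ofReal (1 / 2 + ε) • Measure.dirac (0 : ℝ)
          + ENNReal.ofReal (1 / 2 - ε) • Measure.dirac (1 : ℝ)) →
      (D {0}).toReal / (D (Set.Ici (0 : ℝ))).toReal
          ≤ (D {1}).toReal / (D (Set.Ici (1 : ℝ))).toReal ∧
      2 * (∫ x, x ∂D) ^ 2 < ∫ x, x ^ 2 ∂D := by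
  intro D hD
  have hp : (0:ℝ) ≤ 1 / 2 + ε := by linarith
  have hm : (0:ℝ) < 1 / 2 - ε := by linarith
  have hane : ENNReal.ofReal (1 / 2 + ε) ≠ ⊤ := ENNReal.ofReal_ne_top
  have hbne : ENNReal.ofReal (1 / 2 - ε) ≠ ⊤ := ENNReal.ofReal_ne_top
  subst hD
  set a := ENNReal.ofReal (1 / 2 + ε)
  set b := ENNReal.ofReal (1 / 2 - ε)
  have e1 : (a • Measure.dirac (0:ℝ) + b • Measure.dirac (1:ℝ)) {0} = a := by
    simp [Measure.dirac_apply, Set.indicator_apply]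
  have e2 : (a • Measure.dirac (0:ℝ) + b • Measure.dirac (1:ℝ)) (Set.Ici 0) = a + b := by
    simp [Measure.dirac_apply, Set.indicator_apply]
  have e3 : (a • Measure.dirac (0:ℝ) + b • Measure.dirac (1:ℝ)) {1} = b := by
    simp [Measure.dirac_apply, Set.indicator_apply]
  have e4 : (a • Measure.dirac (0:ℝ) + b • Measure.dirac (1:ℝ)) (Set.Ici 1) = b := by
    simp [Measure.dirac_apply, Set.indicator_apply]
  constructor
  · rw [e1, e2, e3, e4, ENNReal.toReal_add hane hbne]
    simp only [a, b, ENNReal.toReal_ofReal hp, ENNReal.toReal_ofReal hm.le]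
    rw [div_self (by linarith)]
    rw [div_le_one (by linarith)]
    linarith
  · rw [intdirac_aux (fun x => x) measurable_id _ _ hane hbne,
      intdirac_aux (fun x => x ^ 2) (measurable_id.pow_const 2) _ _ hane hbne]
    simp only [a, b, ENNReal.toReal_ofReal hp, ENNReal.toReal_ofReal hm.le, id]
    norm_num
    nlinarith
end

section
/- Let T be uniformly distributed on [0,1]. Then for all positive integers n and m: E[T[1:n]] = 1/(n+1), and E[T[1:n][m:m]] = 1 − m·B(m, 1 + 1/n), where B(x,y) = ∫₀¹ t^{x−1}(1−t)^{y−1} dt is the beta function. -/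
open MeasureTheory ProbabilityTheory Finset

open MeasureTheory intervalIntegral Set in
private lemma aux_parts (a b : ℕ) :
    ∫ t in (0:ℝ)..1, (1 - t^(a+1))^(b+1)
      = (((b:ℝ)+1) * ((a:ℝ)+1)) * ∫ t in (0:ℝ)..1, t^(a+1) * (1 - t^(a+1))^b := by
  have hF : ∀ t ∈ Set.uIcc (0:ℝ) 1, HasDerivAt (fun t : ℝ => t * (1 - t^(a+1))^(b+1))
      ((1 - t^(a+1))^(b+1) - (((b:ℝ)+1) * ((a:ℝ)+1)) * (t^(a+1) * (1 - t^(a+1))^b)) t := by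
    intro t _
    have h1 : HasDerivAt (fun t : ℝ => 1 - t^(a+1)) (-(((a:ℝ)+1) * t^a)) t := by
      simpa using ((hasDerivAt_pow (a+1) t).const_sub 1)
    have h2 : HasDerivAt (fun t : ℝ => t * (1 - t^(a+1))^(b+1)) _ t := (hasDerivAt_id' t).mul (h1.pow (b+1))
    convert h2 using 1
    push_cast
    ring
  have hint : IntervalIntegrable (fun t : ℝ =>
      (1 - t^(a+1))^(b+1) - (((b:ℝ)+1) * ((a:ℝ)+1)) * (t^(a+1) * (1 - t^(a+1))^b))
      volume 0 1 := ((by continuity : Continuous _).intervalIntegrable 0 1)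
  have key := intervalIntegral.integral_eq_sub_of_hasDerivAt hF hint
  have h1 : IntervalIntegrable (fun t : ℝ => (1 - t^(a+1))^(b+1)) volume 0 1 :=
    (by continuity : Continuous _).intervalIntegrable 0 1
  have h2 : IntervalIntegrable (fun t : ℝ =>
      (((b:ℝ)+1) * ((a:ℝ)+1)) * (t^(a+1) * (1 - t^(a+1))^b)) volume 0 1 :=
    (by continuity : Continuous _).intervalIntegrable 0 1
  rw [intervalIntegral.integral_sub h1 h2, intervalIntegral.integral_const_mul] at key
  simp only [one_pow, sub_self, one_mul, zero_pow, Nat.succ_ne_zero, ne_eq,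
    not_false_iff, zero_mul, sub_zero, mul_zero] at key
  linarith

open MeasureTheory intervalIntegral Set in
private lemma aux_subst (a b : ℕ) :
    ∫ s in (0:ℝ)..1, s^b * (1-s)^((1:ℝ)/((a:ℝ)+1))
      = ((a:ℝ)+1) * ∫ t in (0:ℝ)..1, t^(a+1) * (1 - t^(a+1))^b := by
  have hg : Continuous (fun s : ℝ => s^b * (1-s)^((1:ℝ)/((a:ℝ)+1))) := by
    apply (continuous_pow b).mul
    exact (Real.continuous_rpow_const (by positivity)).comp (continuous_const.sub continuous_id)
  have hf : ∀ x ∈ Set.uIcc (0:ℝ) 1,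
      HasDerivAt (fun t : ℝ => 1 - t^(a+1)) (-(((a:ℝ)+1) * x^a)) x := by
    intro x _
    simpa using ((hasDerivAt_pow (a+1) x).const_sub 1)
  have h' : ContinuousOn (fun x : ℝ => -(((a:ℝ)+1) * x^a)) (Set.uIcc (0:ℝ) 1) :=
    (by continuity : Continuous fun x : ℝ => -(((a:ℝ)+1) * x^a)).continuousOn
  have key := intervalIntegral.integral_comp_smul_deriv hf h' hg
  have hb : (1:ℝ) - (0:ℝ)^(a+1) = 1 := by simp
  have hb' : (1:ℝ) - (1:ℝ)^(a+1) = 0 := by simp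
  rw [hb, hb'] at key
  rw [intervalIntegral.integral_symm 0 1] at key
  have key2 : ∫ x in (0:ℝ)..1,
      (-(((a:ℝ)+1) * x^a)) • ((fun s : ℝ => s^b * (1-s)^((1:ℝ)/((a:ℝ)+1))) ∘
        (fun t : ℝ => 1 - t^(a+1))) x
      = ∫ x in (0:ℝ)..1, -(((a:ℝ)+1) * (x^(a+1) * (1 - x^(a+1))^b)) := by
    apply intervalIntegral.integral_congr
    intro x hx
    rw [Set.uIcc_of_le (zero_le_one)] at hx
    have hx0 : (0:ℝ) ≤ x := hx.1
    have hxp : ((x^(a+1):ℝ)) ^ ((1:ℝ)/((a:ℝ)+1)) = x := by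
      rw [← Real.rpow_natCast x (a+1), ← Real.rpow_mul hx0]
      push_cast
      rw [mul_one_div_cancel (by positivity : ((a:ℝ)+1) ≠ 0), Real.rpow_one]
    simp only [Function.comp_apply, smul_eq_mul]
    rw [show (1:ℝ) - (1 - x^(a+1)) = x^(a+1) by ring, hxp]
    ring
  rw [key2] at key
  rw [intervalIntegral.integral_neg, intervalIntegral.integral_const_mul] at key
  linarith

open MeasureTheory intervalIntegral Set in
private lemma aux_calc (n m : ℕ) (hn : 0 < n) (hm : 0 < m) :
    (m:ℝ) * ∫ s in (0:ℝ)..1, s^(m-1) * (1-s)^((1:ℝ)/(n:ℝ))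
      = ∫ t in (0:ℝ)..1, (1 - t^n)^m := by
  obtain ⟨a, rfl⟩ : ∃ a, n = a + 1 := ⟨n-1, (Nat.succ_pred_eq_of_pos hn).symm⟩
  obtain ⟨b, rfl⟩ : ∃ b, m = b + 1 := ⟨m-1, (Nat.succ_pred_eq_of_pos hm).symm⟩
  simp only [Nat.add_sub_cancel]
  push_cast
  rw [aux_subst a b, aux_parts a b]
  ring

open MeasureTheory in
private lemma map_pi_ae_Icc {k : ℕ} (μ : Measure ℝ) [IsProbabilityMeasure μ]
    (hμ : μ (Set.Icc (0:ℝ) 1) = 1) (g : (Fin k → ℝ) → ℝ) (hg : Measurable g)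
    (hgmem : ∀ x : Fin k → ℝ, (∀ i, x i ∈ Set.Icc (0:ℝ) 1) → g x ∈ Set.Icc (0:ℝ) 1) :
    ∀ᵐ y ∂ ((Measure.pi fun _ : Fin k => μ).map g), y ∈ Set.Icc (0:ℝ) 1 := by
  refine (MeasureTheory.ae_map_iff hg.aemeasurable measurableSet_Icc).2 ?_
  have hcube : (Measure.pi fun _ : Fin k => μ) (Set.pi Set.univ fun _ => Set.Icc (0:ℝ) 1) = 1 := by
    rw [Measure.pi_pi]; simp [hμ]
  have hc : (Measure.pi fun _ : Fin k => μ) ((Set.pi Set.univ fun _ => Set.Icc (0:ℝ) 1)ᶜ) = 0 := by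
    rw [prob_compl_eq_zero_iff (MeasurableSet.univ_pi fun _ => measurableSet_Icc)]
    exact hcube
  refine MeasureTheory.ae_iff.2 (measure_mono_null ?_ hc)
  intro x hx hxc
  exact hx (hgmem x (fun i => hxc i trivial))

/-- Order statistics of the uniform distribution on `[0,1]`: `E[T[1:n]] = 1/(n+1)` and
`E[T[1:n][m:m]] = 1 - m · B(m, 1 + 1/n)`, where `B` is the beta function. -/
theorem uniform_order_statistics (n m : ℕ) (hn : 0 < n) (hm : 0 < m) :
    (∫ x, x ∂(minStat n (MeasureTheory.volume.restrict (Set.Icc (0:ℝ) 1)))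
        = 1 / ((n : ℝ) + 1)) ∧
    (∫ x, x ∂(maxStat m (minStat n (MeasureTheory.volume.restrict (Set.Icc (0:ℝ) 1))))
        = 1 - (m : ℝ) *
            ∫ s in (0:ℝ)..1, s ^ ((m : ℝ) - 1) * (1 - s) ^ ((1 + 1 / (n : ℝ)) - 1)) := by
  haveI : Nonempty (Fin n) := ⟨⟨0, hn⟩⟩
  haveI : Nonempty (Fin m) := ⟨⟨0, hm⟩⟩
  set U : Measure ℝ := MeasureTheory.volume.restrict (Set.Icc (0:ℝ) 1) with hU
  haveI hUp : IsProbabilityMeasure U := ⟨by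
    rw [hU, Measure.restrict_apply_univ, Real.volume_Icc]; norm_num⟩
  have hinf : Measurable (fun x : Fin n → ℝ => ⨅ i, x i) :=
    Measurable.iInf (fun i => measurable_pi_apply i)
  have hsup : Measurable (fun x : Fin m → ℝ => ⨆ j, x j) :=
    Measurable.iSup (fun j => measurable_pi_apply j)
  haveI hP₁ : IsProbabilityMeasure (minStat n U) := by
    unfold minStat; exact Measure.isProbabilityMeasure_map hinf.aemeasurable
  haveI hP₂ : IsProbabilityMeasure (maxStat m (minStat n U)) := by
    unfold maxStat; exact Measure.isProbabilityMeasure_map hsup.aemeasurable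
  -- U of Ici
  have hUIci : ∀ t : ℝ, 0 < t → U (Set.Ici t) = ENNReal.ofReal (1 - t) := by
    intro t ht
    have hset : Set.Ici t ∩ Set.Icc (0:ℝ) 1 = Set.Icc t 1 := by
      ext x
      simp only [Set.mem_inter_iff, Set.mem_Ici, Set.mem_Icc]
      constructor
      · rintro ⟨h1, _, h3⟩; exact ⟨h1, h3⟩
      · rintro ⟨h1, h2⟩; exact ⟨h1, le_trans ht.le h1, h2⟩
    rw [hU, Measure.restrict_apply measurableSet_Ici, hset, Real.volume_Icc]
  have hUIcc : U (Set.Icc (0:ℝ) 1) = 1 := by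
    rw [hU, Measure.restrict_apply measurableSet_Icc, Set.inter_self, Real.volume_Icc]
    norm_num
  -- tail of the min
  have hμ₁Ici : ∀ t : ℝ, 0 < t → t ≤ 1 →
      minStat n U (Set.Ici t) = ENNReal.ofReal ((1-t)^n) := by
    intro t ht ht1
    unfold minStat
    rw [Measure.map_apply hinf measurableSet_Ici]
    have hpre : (fun x : Fin n → ℝ => ⨅ i, x i) ⁻¹' Set.Ici t
        = Set.pi Set.univ (fun _ => Set.Ici t) := by
      ext x
      simp only [Set.mem_preimage, Set.mem_Ici, Set.mem_pi, Set.mem_univ, true_implies]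
      exact le_ciInf_iff (Set.Finite.bddBelow (Set.finite_range x))
    rw [hpre, Measure.pi_pi]
    simp only [Finset.prod_const, Finset.card_univ, Fintype.card_fin]
    rw [hUIci t ht, ← ENNReal.ofReal_pow (by linarith)]
  -- a.e. supports
  have hμ₁ae : ∀ᵐ y ∂ (minStat n U), y ∈ Set.Icc (0:ℝ) 1 := by
    unfold minStat
    refine map_pi_ae_Icc U hUIcc _ hinf (fun x hx => ⟨?_, ?_⟩)
    · exact le_ciInf fun i => (hx i).1
    · exact le_trans (ciInf_le (Set.Finite.bddBelow (Set.finite_range x))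
        (Classical.arbitrary _)) (hx _).2
  have hIcc₁ : minStat n U (Set.Icc (0:ℝ) 1) = 1 := by
    rw [← prob_compl_eq_zero_iff measurableSet_Icc]
    exact MeasureTheory.ae_iff.1 hμ₁ae
  have hμ₂ae : ∀ᵐ y ∂ (maxStat m (minStat n U)), y ∈ Set.Icc (0:ℝ) 1 := by
    unfold maxStat
    refine map_pi_ae_Icc (minStat n U) hIcc₁ _ hsup (fun x hx => ⟨?_, ?_⟩)
    · exact le_trans (hx (Classical.arbitrary _)).1
        (le_ciSup (Set.Finite.bddAbove (Set.finite_range x)) _)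
    · exact ciSup_le fun j => (hx j).2
  -- tail of the max of mins
  have hμ₂Ici : ∀ t : ℝ, 0 < t → t ≤ 1 →
      maxStat m (minStat n U) (Set.Ici t) = ENNReal.ofReal (1 - (1 - (1-t)^n)^m) := by
    intro t ht ht1
    have hp : (0:ℝ) ≤ (1-t)^n := pow_nonneg (by linarith) n
    have hp1 : (1-t)^n ≤ 1 := pow_le_one₀ (by linarith) (by linarith)
    have h1 : minStat n U (Set.Iio t) = ENNReal.ofReal (1 - (1-t)^n) := by
      rw [← Set.compl_Ici, prob_compl_eq_one_sub measurableSet_Ici, hμ₁Ici t ht ht1,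
          ENNReal.ofReal_sub 1 hp, ENNReal.ofReal_one]
    have h2 : maxStat m (minStat n U) (Set.Iio t)
        = ENNReal.ofReal ((1 - (1-t)^n)^m) := by
      unfold maxStat
      rw [Measure.map_apply hsup measurableSet_Iio]
      have hpre : (fun x : Fin m → ℝ => ⨆ j, x j) ⁻¹' Set.Iio t
          = Set.pi Set.univ (fun _ => Set.Iio t) := by
        ext x
        simp only [Set.mem_preimage, Set.mem_Iio, Set.mem_pi, Set.mem_univ, true_implies]
        constructor
        · intro h j
          exact lt_of_le_of_lt (le_ciSup (Set.Finite.bddAbove (Set.finite_range x)) j) h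
        · intro h
          obtain ⟨j0, hj0⟩ := Finite.exists_max x
          exact lt_of_le_of_lt (ciSup_le hj0) (h j0)
      rw [hpre, Measure.pi_pi, h1]
      simp only [Finset.prod_const, Finset.card_univ, Fintype.card_fin]
      rw [← ENNReal.ofReal_pow (by linarith)]
    rw [← Set.compl_Iio, prob_compl_eq_one_sub measurableSet_Iio, h2,
        ENNReal.ofReal_sub 1 (pow_nonneg (by linarith) m), ENNReal.ofReal_one]
  -- integrability
  have hint₁ : Integrable (fun x : ℝ => x) (minStat n U) := by
    refine Integrable.mono' (integrable_const 1) measurable_id.aestronglyMeasurable ?_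
    filter_upwards [hμ₁ae] with x hx
    rw [Real.norm_eq_abs, abs_le]; exact ⟨by linarith [hx.1], hx.2⟩
  have hint₂ : Integrable (fun x : ℝ => x) (maxStat m (minStat n U)) := by
    refine Integrable.mono' (integrable_const 1) measurable_id.aestronglyMeasurable ?_
    filter_upwards [hμ₂ae] with x hx
    rw [Real.norm_eq_abs, abs_le]; exact ⟨by linarith [hx.1], hx.2⟩
  -- layer cake
  have h₁ := hint₁.integral_eq_integral_Ioc_meas_le (M := 1)
      (hμ₁ae.mono fun x hx => hx.1) (hμ₁ae.mono fun x hx => hx.2)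
  have h₂ := hint₂.integral_eq_integral_Ioc_meas_le (M := 1)
      (hμ₂ae.mono fun x hx => hx.1) (hμ₂ae.mono fun x hx => hx.2)
  constructor
  · rw [h₁]
    have e₁ : ∫ t in Set.Ioc (0:ℝ) 1, (minStat n U).real {a : ℝ | t ≤ a}
        = ∫ t in Set.Ioc (0:ℝ) 1, (1-t)^n := by
      apply setIntegral_congr_fun measurableSet_Ioc
      intro t ht
      show (minStat n U (Set.Ici t)).toReal = _
      rw [hμ₁Ici t ht.1 ht.2, ENNReal.toReal_ofReal (pow_nonneg (by linarith [ht.2]) n)]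
    rw [e₁, ← intervalIntegral.integral_of_le zero_le_one]
    have e₂ := intervalIntegral.integral_comp_sub_left (a := 0) (b := 1) (fun x : ℝ => x ^ n) 1
    simp only [sub_zero, sub_self] at e₂
    rw [e₂, integral_pow, one_pow, zero_pow (Nat.succ_ne_zero n)]
    norm_num
  · rw [h₂]
    have e₁ : ∫ t in Set.Ioc (0:ℝ) 1, (maxStat m (minStat n U)).real {a : ℝ | t ≤ a}
        = ∫ t in Set.Ioc (0:ℝ) 1, (1 - (1 - (1-t)^n)^m) := by
      apply setIntegral_congr_fun measurableSet_Ioc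
      intro t ht
      show (maxStat m (minStat n U) (Set.Ici t)).toReal = _
      have ha : (0:ℝ) < t := ht.1
      have hb : t ≤ 1 := ht.2
      have hp : (0:ℝ) ≤ (1-t)^n := pow_nonneg (by linarith) n
      have hp1 : (1-t)^n ≤ 1 := pow_le_one₀ (by linarith) (by linarith)
      have hq : (1 - (1-t)^n)^m ≤ 1 := pow_le_one₀ (by linarith) (by linarith)
      rw [hμ₂Ici t ht.1 ht.2, ENNReal.toReal_ofReal (by linarith)]
    rw [e₁, ← intervalIntegral.integral_of_le zero_le_one]
    have c₁ : IntervalIntegrable (fun _ : ℝ => (1:ℝ)) MeasureTheory.volume 0 1 :=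
      intervalIntegrable_const
    have c₂ : IntervalIntegrable (fun t : ℝ => (1 - (1-t)^n)^m) MeasureTheory.volume 0 1 :=
      (Continuous.intervalIntegrable
        ((continuous_const.sub ((continuous_const.sub continuous_id).pow n)).pow m) 0 1)
    rw [intervalIntegral.integral_sub c₁ c₂]
    have e₂ := intervalIntegral.integral_comp_sub_left (a := 0) (b := 1)
      (fun u : ℝ => (1 - u^n)^m) 1
    simp only [sub_zero, sub_self] at e₂
    rw [e₂]
    have eB : ∫ s in (0:ℝ)..1, s ^ ((m:ℝ)-1) * (1-s) ^ ((1 + 1/(n:ℝ)) - 1)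
        = ∫ s in (0:ℝ)..1, (s:ℝ)^(m-1) * (1-s)^((1:ℝ)/(n:ℝ)) := by
      apply intervalIntegral.integral_congr
      intro s _
      show s ^ ((m:ℝ)-1) * (1-s) ^ ((1 + 1/(n:ℝ)) - 1) = (s:ℝ)^(m-1) * (1-s)^((1:ℝ)/(n:ℝ))
      rw [show ((m:ℝ)-1) = ((m-1:ℕ):ℝ) by rw [Nat.cast_sub hm]; norm_num,
          Real.rpow_natCast, show ((1:ℝ) + 1/(n:ℝ)) - 1 = 1/(n:ℝ) by ring]
    rw [eB, aux_calc n m hn hm]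
    simp
end

section
/- For every positive integer n, the quantity (n+1)·(1 − n·B(n, 1 + 1/n)) is at least ln n, where B(x,y) = ∫₀¹ t^{x−1}(1−t)^{y−1} dt is the beta function. Equivalently, for T uniformly distributed on [0,1], E[T[1:n][n:n]] ≥ (ln n)·E[T[1:n]] for all positive integers n, i.e., the uniform distribution on [0,1] is ln-stretched. -/
open MeasureTheory ProbabilityTheory Finset

section AnalyticAux
open intervalIntegral Set

lemma beta_eq (n : ℕ) (hn : 0 < n) :
    (n : ℝ) * ∫ s in (0:ℝ)..1, s ^ ((n : ℝ) - 1) * (1 - s) ^ ((1 + 1 / (n : ℝ)) - 1)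
      = ∫ t in (0:ℝ)..1, ((1:ℝ) - t^n)^n := by
  have hn' : (n:ℝ) ≠ 0 := Nat.cast_ne_zero.mpr hn.ne'
  have hinvpos : (0:ℝ) < 1 / n := by positivity
  have h1 : ∀ s : ℝ, s ^ ((n : ℝ) - 1) * (1 - s) ^ ((1 + 1 / (n : ℝ)) - 1)
      = s ^ (n-1 : ℕ) * (1 - s) ^ (1 / (n:ℝ)) := by
    intro s
    have : ((n:ℝ) - 1) = ((n - 1 : ℕ) : ℝ) := by
      push_cast [Nat.cast_sub hn]; ring
    rw [this, Real.rpow_natCast]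
    congr 1
    ring_nf
  rw [intervalIntegral.integral_congr (fun s _ => h1 s)]
  have h2 : (∫ s in (0:ℝ)..1, s ^ (n-1 : ℕ) * (1 - s) ^ (1 / (n:ℝ)))
      = ∫ s in (0:ℝ)..1, (1 - s) ^ (n-1 : ℕ) * s ^ (1 / (n:ℝ)) := by
    have := intervalIntegral.integral_comp_sub_left
      (fun u : ℝ => (1 - u) ^ (n-1 : ℕ) * u ^ (1 / (n:ℝ))) 1 (a := 0) (b := 1)
    simp only [sub_sub_cancel, sub_zero, sub_self] at this
    rw [← this]
  rw [h2]
  have hcont : Continuous (fun u : ℝ => (1 - u) ^ (n-1 : ℕ) * u ^ (1 / (n:ℝ))) := by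
    apply Continuous.mul (by fun_prop)
    exact continuous_iff_continuousAt.2 fun x =>
      Real.continuousAt_rpow_const x _ (Or.inr hinvpos.le)
  have h3 := intervalIntegral.integral_comp_smul_deriv (a := (0:ℝ)) (b := 1)
      (f := fun t : ℝ => t ^ n) (f' := fun t : ℝ => n * t ^ (n-1 : ℕ))
      (g := fun u : ℝ => (1 - u) ^ (n-1 : ℕ) * u ^ (1 / (n:ℝ)))
      (fun x _ => by simpa using (hasDerivAt_pow n x))
      ((continuous_const.mul (continuous_pow _)).continuousOn) hcont
  simp only [one_pow, zero_pow hn.ne'] at h3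
  rw [← h3]
  have h4 : ∀ t ∈ uIcc (0:ℝ) 1, HasDerivAt (fun t : ℝ => t * (1 - t^n)^n)
      ((1 - t^n)^n - (n:ℝ)^2 * (t^n * (1 - t^n)^(n-1))) t := by
    intro t _
    have hpow : t * t ^ (n-1:ℕ) = t ^ n := by
      rw [mul_comm, ← pow_succ, Nat.sub_add_cancel hn]
    have hd : HasDerivAt (fun t : ℝ => (1 - t^n)^n)
        ((n : ℝ) * (1 - t^n)^(n-1) * (-(n * t^(n-1:ℕ)))) t := by
      have h0 : HasDerivAt (fun t : ℝ => 1 - t^n) (-(n * t^(n-1:ℕ))) t := by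
        simpa using ((hasDerivAt_pow n t).const_sub 1)
      exact (hasDerivAt_pow n (1 - t^n)).comp t h0
    have h5 := (hasDerivAt_id t).mul hd
    simp only [one_mul, id_eq] at h5
    refine h5.congr_deriv ?_
    rw [← hpow]; ring
  have hc1 : Continuous (fun t : ℝ => ((1:ℝ) - t^n)^n) :=
    (continuous_const.sub (continuous_pow n)).pow n
  have hc2 : Continuous (fun t : ℝ => (n:ℝ)^2 * (t^n * (1 - t^n)^(n-1:ℕ))) :=
    continuous_const.mul ((continuous_pow n).mul
      ((continuous_const.sub (continuous_pow n)).pow (n-1)))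
  have h5 := intervalIntegral.integral_eq_sub_of_hasDerivAt h4
    ((hc1.sub hc2).continuousOn.intervalIntegrable)
  simp only [one_pow, sub_self, zero_pow hn.ne', zero_mul, mul_zero, one_mul, sub_zero,
    zero_sub, mul_one] at h5
  have h6 : (∫ t in (0:ℝ)..1, ((1:ℝ) - t^n)^n)
      = (n:ℝ)^2 * ∫ t in (0:ℝ)..1, t^n * (1 - t^n)^(n-1:ℕ) := by
    have := intervalIntegral.integral_sub (a := (0:ℝ)) (b := 1)
      (hc1.continuousOn.intervalIntegrable (μ := MeasureTheory.volume))
      (hc2.continuousOn.intervalIntegrable (μ := MeasureTheory.volume))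
    rw [h5] at this
    rw [intervalIntegral.integral_const_mul] at this
    linarith [this]
  rw [h6]
  have h7 : (∫ x in (0:ℝ)..1,
        ((n:ℝ) * x ^ (n-1:ℕ)) • (((fun u : ℝ => (1 - u) ^ (n-1 : ℕ) * u ^ (1 / (n:ℝ))) ∘
          fun t : ℝ => t ^ n) x))
      = ∫ x in (0:ℝ)..1, (n:ℝ) * (x^n * (1 - x^n)^(n-1:ℕ)) := by
    apply intervalIntegral.integral_congr
    intro t ht
    rw [Set.uIcc_of_le (by norm_num)] at ht
    have ht0 : 0 ≤ t := ht.1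
    have hroot : ((t:ℝ)^n) ^ (1/(n:ℝ)) = t := by
      rw [← Real.rpow_natCast t n, ← Real.rpow_mul ht0]
      field_simp
      simp
    have hpow : t * t ^ (n-1:ℕ) = t ^ n := by
      rw [mul_comm, ← pow_succ, Nat.sub_add_cancel hn]
    simp only [Function.comp_apply, smul_eq_mul, hroot]
    rw [← hpow]; ring
  rw [h7, intervalIntegral.integral_const_mul]
  ring

lemma cubic_le_exp {c : ℝ} (hc : 0 ≤ c) : c + c^2 ≤ Real.exp c := by
  have h := Real.sum_le_exp_of_nonneg hc 4
  have hs : ∑ i ∈ Finset.range 4, c ^ i / i.factorial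
      = 1 + c + c^2/2 + c^3/6 := by
    norm_num [Finset.sum_range_succ, Nat.factorial]
  rw [hs] at h
  nlinarith [sq_nonneg (c - 2), sq_nonneg c]

lemma pointwise_bound (n : ℕ) (hn : 0 < n) {t : ℝ} (ht0 : 0 ≤ t) (ht1 : t ≤ 1) :
    ((n:ℝ)-1) * t^n / (1 + ((n:ℝ)-1) * t^(n+1)) ≤ 1 - (1 - t^n)^n := by
  have hn1 : (1:ℝ) ≤ n := by exact_mod_cast hn
  set x := t^n with hxdef
  have hx0 : 0 ≤ x := pow_nonneg ht0 n
  have hx1 : x ≤ 1 := pow_le_one₀ ht0 ht1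
  set c := ((n:ℝ)-1) * (1-t) with hcdef
  have hc0 : 0 ≤ c := mul_nonneg (by linarith) (by linarith)
  have hxc : x ≤ Real.exp (-c) := by
    have h1 : t ≤ Real.exp (t - 1) := by
      have := Real.add_one_le_exp (t - 1); linarith
    calc x ≤ (Real.exp (t-1))^n := pow_le_pow_left₀ ht0 h1 n
    _ = Real.exp ((n:ℝ) * (t-1)) := by rw [← Real.exp_nat_mul]
    _ ≤ Real.exp (-c) := Real.exp_le_exp.2 (by nlinarith)
  have hexpc : 0 < Real.exp (-c) := Real.exp_pos _
  have hkey : c * (1+c) * x ≤ 1 := by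
    have h2 : c + c^2 ≤ Real.exp c := cubic_le_exp hc0
    have h3 : c * (1+c) * Real.exp (-c) ≤ 1 := by
      rw [Real.exp_neg]
      rw [mul_inv_le_iff₀ (Real.exp_pos c)]
      nlinarith
    nlinarith [mul_nonneg (mul_nonneg hc0 (by linarith : (0:ℝ) ≤ 1+c)) hx0]
  have hcx0 : 0 ≤ c * x := mul_nonneg hc0 hx0
  have hcx1 : c * x < 1 := by
    by_contra hcon
    push_neg at hcon
    have h5 : c * x ≤ c := by nlinarith [mul_le_mul_of_nonneg_left hx1 hc0]
    have h4 : 1 + c ≤ c * (1+c) * x := by nlinarith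
    linarith
  set v := ((n:ℝ)-1) * t * x with hvdef
  have hv0 : 0 ≤ v := mul_nonneg (mul_nonneg (by linarith) ht0) hx0
  have main : (1-x)^n * (1 + v) ≤ 1 - c*x := by
    have s1 : (1-x)^n ≤ Real.exp (-((n:ℝ)*x)) := by
      have h1 : 1 - x ≤ Real.exp (-x) := by
        have := Real.add_one_le_exp (-x); linarith
      calc (1-x)^n ≤ (Real.exp (-x))^n := pow_le_pow_left₀ (by linarith) h1 n
      _ = Real.exp ((n:ℝ) * (-x)) := by rw [← Real.exp_nat_mul]
      _ = Real.exp (-((n:ℝ)*x)) := by ring_nf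
    have s2 : 1 + v ≤ Real.exp v := by
      have := Real.add_one_le_exp v; linarith
    have s3 : (1-x)^n * (1 + v) ≤ Real.exp (-((1+c)*x)) := by
      calc (1-x)^n * (1 + v) ≤ Real.exp (-((n:ℝ)*x)) * Real.exp v := by
            apply mul_le_mul s1 s2 (by linarith) (le_of_lt (Real.exp_pos _))
      _ = Real.exp (-((n:ℝ)*x) + v) := (Real.exp_add _ _).symm
      _ = Real.exp (-((1+c)*x)) := by congr 1; rw [hvdef, hcdef]; ring
    have s4 : Real.exp (-((1+c)*x)) ≤ 1 - c*x := by
      set w := c*x/(1-c*x) with hwdef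
      have hw0 : 0 ≤ w := div_nonneg hcx0 (by linarith)
      have s5 : -((1+c)*x) ≤ -w := by
        rw [neg_le_neg_iff, hwdef, div_le_iff₀ (by linarith : (0:ℝ) < 1 - c*x)]
        nlinarith
      have s6 : Real.exp (-w) ≤ 1 - c*x := by
        rw [Real.exp_neg]
        rw [inv_le_iff_one_le_mul₀ (Real.exp_pos w)]
        have hne : (1:ℝ) - c * x ≠ 0 := ne_of_gt (by linarith)
        have h7 : (1 + w) * (1-c*x) = 1 := by
          rw [hwdef]; field_simp
          ring
        calc (1:ℝ) = (1+w)*(1-c*x) := h7.symm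
        _ ≤ Real.exp w * (1-c*x) := by
            apply mul_le_mul_of_nonneg_right _ (by linarith)
            have := Real.add_one_le_exp w; linarith
        _ = (1-c*x) * Real.exp w := mul_comm _ _
      exact le_trans (Real.exp_le_exp.2 s5) s6
    exact le_trans s3 s4
  have hpow : t^(n+1) = x * t := by rw [hxdef, pow_succ]
  rw [hpow]
  have hden : (0:ℝ) < 1 + ((n:ℝ)-1) * (x*t) := by nlinarith
  have hveq : ((n:ℝ)-1) * (x*t) = v := by rw [hvdef]; ring
  rw [div_le_iff₀ hden, hveq]
  have hsum : v + c * x = ((n:ℝ)-1) * x := by rw [hvdef, hcdef]; ring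
  nlinarith [main, hsum]

lemma log_div_le_integral (n : ℕ) (hn : 0 < n) :
    Real.log n / ((n:ℝ)+1) ≤ ∫ t in (0:ℝ)..1, (1 - ((1:ℝ) - t^n)^n) := by
  have hn1 : (1:ℝ) ≤ n := by exact_mod_cast hn
  have hcont_den : Continuous (fun t : ℝ => 1 + ((n:ℝ)-1) * t^(n+1)) := by fun_prop
  have hden : ∀ t : ℝ, 0 ≤ t → 0 < 1 + ((n:ℝ)-1) * t^(n+1) := by
    intro t ht
    have : 0 ≤ ((n:ℝ)-1) * t^(n+1) := mul_nonneg (by linarith) (pow_nonneg ht _)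
    linarith
  have hFTC : ∫ t in (0:ℝ)..1, ((n:ℝ)-1) * t^n / (1 + ((n:ℝ)-1) * t^(n+1))
      = Real.log n / ((n:ℝ)+1) := by
    have hd : ∀ t ∈ Set.uIcc (0:ℝ) 1,
        HasDerivAt (fun t : ℝ => Real.log (1 + ((n:ℝ)-1) * t^(n+1)) / ((n:ℝ)+1))
          (((n:ℝ)-1) * t^n / (1 + ((n:ℝ)-1) * t^(n+1))) t := by
      intro t ht
      rw [Set.uIcc_of_le zero_le_one] at ht
      have hdent := hden t ht.1
      have h1 : HasDerivAt (fun t:ℝ => 1 + ((n:ℝ)-1) * t^(n+1))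
          (((n:ℝ)-1)*(((n:ℝ)+1) * t^n)) t := by
        have := ((hasDerivAt_pow (n+1) t).const_mul ((n:ℝ)-1)).const_add 1
        simpa using this
      have h2 := (Real.hasDerivAt_log (ne_of_gt hdent)).comp t h1
      have h3 := h2.div_const ((n:ℝ)+1)
      refine h3.congr_deriv ?_
      have hne : (1 + ((n:ℝ)-1) * t^(n+1)) ≠ 0 := ne_of_gt hdent
      field_simp
    have hi : IntervalIntegrable
        (fun t : ℝ => ((n:ℝ)-1) * t^n / (1 + ((n:ℝ)-1) * t^(n+1)))
        MeasureTheory.volume 0 1 := by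
      apply ContinuousOn.intervalIntegrable
      apply ContinuousOn.div (by fun_prop) hcont_den.continuousOn
      intro t ht
      rw [Set.uIcc_of_le zero_le_one] at ht
      exact ne_of_gt (hden t ht.1)
    rw [intervalIntegral.integral_eq_sub_of_hasDerivAt hd hi]
    norm_num
  rw [← hFTC]
  apply intervalIntegral.integral_mono_on zero_le_one
  · apply ContinuousOn.intervalIntegrable
    apply ContinuousOn.div (by fun_prop) hcont_den.continuousOn
    intro t ht
    rw [Set.uIcc_of_le zero_le_one] at ht
    exact ne_of_gt (hden t ht.1)
  · apply ContinuousOn.intervalIntegrable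
    apply Continuous.continuousOn
    fun_prop
  · intro t ht
    exact pointwise_bound n hn ht.1 ht.2

end AnalyticAux

section Aux

variable {n : ℕ}

lemma meas_inf : Measurable (fun x : Fin n → ℝ => ⨅ i, x i) :=
  Measurable.iInf (fun i => measurable_pi_apply i)

lemma meas_sup : Measurable (fun x : Fin n → ℝ => ⨆ i, x i) :=
  Measurable.iSup (fun i => measurable_pi_apply i)

lemma inf_preimage_Ioi (hn : 0 < n) (t : ℝ) :
    (fun x : Fin n → ℝ => ⨅ i, x i) ⁻¹' (Set.Ioi t)
      = Set.pi Set.univ (fun _ : Fin n => Set.Ioi t) := by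
  haveI : Nonempty (Fin n) := Fin.pos_iff_nonempty.mp hn
  ext x
  simp only [Set.mem_preimage, Set.mem_Ioi, Set.mem_pi, Set.mem_univ, forall_true_left]
  constructor
  · intro h i
    exact lt_of_lt_of_le h (ciInf_le (Set.Finite.bddBelow (Set.finite_range x)) i)
  · intro h
    obtain ⟨i0, -, hi0⟩ := Finset.exists_min_image Finset.univ x ⟨Classical.arbitrary _, Finset.mem_univ _⟩
    exact lt_of_lt_of_le (h i0) (le_ciInf (fun j => hi0 j (Finset.mem_univ j)))

lemma sup_preimage_Iic (hn : 0 < n) (t : ℝ) :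
    (fun x : Fin n → ℝ => ⨆ i, x i) ⁻¹' (Set.Iic t)
      = Set.pi Set.univ (fun _ : Fin n => Set.Iic t) := by
  haveI : Nonempty (Fin n) := Fin.pos_iff_nonempty.mp hn
  ext x
  simp only [Set.mem_preimage, Set.mem_Iic, Set.mem_pi, Set.mem_univ, forall_true_left]
  exact ciSup_le_iff (Set.Finite.bddAbove (Set.finite_range x))

lemma minStat_Ioi (μ : Measure ℝ) [IsProbabilityMeasure μ] (hn : 0 < n) (t : ℝ) :
    minStat n μ (Set.Ioi t) = (μ (Set.Ioi t))^n := by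
  rw [minStat, Measure.map_apply meas_inf measurableSet_Ioi, inf_preimage_Ioi hn,
    Measure.pi_pi]
  simp [Finset.prod_const]

lemma maxStat_Ioi (μ : Measure ℝ) [IsProbabilityMeasure μ] (hn : 0 < n) (t : ℝ) :
    maxStat n μ (Set.Ioi t) = 1 - (μ (Set.Iic t))^n := by
  rw [maxStat, Measure.map_apply meas_sup measurableSet_Ioi]
  have hcompl : (fun x : Fin n → ℝ => ⨆ i, x i) ⁻¹' (Set.Ioi t)
      = (Set.pi Set.univ (fun _ : Fin n => Set.Iic t))ᶜ := by
    rw [← sup_preimage_Iic hn, ← Set.preimage_compl, Set.compl_Iic]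
  rw [hcompl, prob_compl_eq_one_sub (MeasurableSet.univ_pi (fun _ => measurableSet_Iic)),
    Measure.pi_pi]
  simp [Finset.prod_const]

lemma minStat_supp (μ : Measure ℝ) [IsProbabilityMeasure μ] (hn : 0 < n)
    (hμ : μ ((Set.Icc (0:ℝ) 1)ᶜ) = 0) : minStat n μ ((Set.Icc (0:ℝ) 1)ᶜ) = 0 := by
  haveI : Nonempty (Fin n) := Fin.pos_iff_nonempty.mp hn
  rw [minStat, Measure.map_apply meas_inf measurableSet_Icc.compl]
  refine measure_mono_null (t := ⋃ i : Fin n, Function.eval i ⁻¹' (Set.Icc (0:ℝ) 1)ᶜ) ?_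
    (measure_iUnion_null fun i => Measure.pi_eval_preimage_null _ hμ)
  · intro x hx
    simp only [Set.mem_preimage, Set.mem_compl_iff, Set.mem_Icc] at hx
    by_contra hcon
    simp only [Set.mem_iUnion, Set.mem_preimage, Function.eval, Set.mem_compl_iff,
      Set.mem_Icc, not_exists, not_not] at hcon
    apply hx
    constructor
    · exact le_ciInf (fun i => (hcon i).1)
    · exact le_trans (ciInf_le (Set.Finite.bddBelow (Set.finite_range x))
        (Classical.arbitrary _)) (hcon _).2

lemma maxStat_supp (μ : Measure ℝ) [IsProbabilityMeasure μ] (hn : 0 < n)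
    (hμ : μ ((Set.Icc (0:ℝ) 1)ᶜ) = 0) : maxStat n μ ((Set.Icc (0:ℝ) 1)ᶜ) = 0 := by
  haveI : Nonempty (Fin n) := Fin.pos_iff_nonempty.mp hn
  rw [maxStat, Measure.map_apply meas_sup measurableSet_Icc.compl]
  refine measure_mono_null (t := ⋃ i : Fin n, Function.eval i ⁻¹' (Set.Icc (0:ℝ) 1)ᶜ) ?_
    (measure_iUnion_null fun i => Measure.pi_eval_preimage_null _ hμ)
  · intro x hx
    simp only [Set.mem_preimage, Set.mem_compl_iff, Set.mem_Icc] at hx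
    by_contra hcon
    simp only [Set.mem_iUnion, Set.mem_preimage, Function.eval, Set.mem_compl_iff,
      Set.mem_Icc, not_exists, not_not] at hcon
    apply hx
    constructor
    · exact le_trans (hcon (Classical.arbitrary _)).1
        (le_ciSup (Set.Finite.bddAbove (Set.finite_range x)) (Classical.arbitrary _))
    · exact ciSup_le (fun i => (hcon i).2)

lemma integrable_id_of_supp (μ : Measure ℝ) [IsProbabilityMeasure μ]
    (hμ : μ ((Set.Icc (0:ℝ) 1)ᶜ) = 0) :
    Integrable (fun x : ℝ => x) μ ∧ 0 ≤ᵐ[μ] (fun x : ℝ => x) := by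
  have hae : ∀ᵐ x ∂μ, x ∈ Set.Icc (0:ℝ) 1 := by
    rw [ae_iff]
    have he : {x : ℝ | ¬ x ∈ Set.Icc (0:ℝ) 1} = (Set.Icc (0:ℝ) 1)ᶜ := rfl
    rw [he]
    exact hμ
  constructor
  · refine Integrable.mono' (integrable_const 1) measurable_id.aestronglyMeasurable ?_
    filter_upwards [hae] with x hx
    rw [Real.norm_eq_abs, abs_le]
    exact ⟨by linarith [hx.1], hx.2⟩
  · filter_upwards [hae] with x hx using hx.1

end Aux

section Expect

lemma probD : IsProbabilityMeasure (volume.restrict (Set.Icc (0:ℝ) 1)) :=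
  ⟨by simp [Real.volume_Icc]⟩

lemma D_compl : (volume.restrict (Set.Icc (0:ℝ) 1)) ((Set.Icc (0:ℝ) 1)ᶜ) = 0 := by
  rw [Measure.restrict_apply measurableSet_Icc.compl]
  simp

lemma D_Ioi {t : ℝ} (h0 : 0 ≤ t) (h1 : t ≤ 1) :
    (volume.restrict (Set.Icc (0:ℝ) 1)) (Set.Ioi t) = ENNReal.ofReal (1-t) := by
  rw [Measure.restrict_apply measurableSet_Ioi]
  have he : Set.Ioi t ∩ Set.Icc 0 1 = Set.Ioc t 1 := by
    ext x
    simp only [Set.mem_inter_iff, Set.mem_Ioi, Set.mem_Icc, Set.mem_Ioc]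
    constructor
    · rintro ⟨ha, -, hc⟩; exact ⟨ha, hc⟩
    · rintro ⟨ha, hb⟩; exact ⟨ha, by linarith, hb⟩
  rw [he, Real.volume_Ioc]

lemma D_Ioi_zero {t : ℝ} (h1 : 1 < t) :
    (volume.restrict (Set.Icc (0:ℝ) 1)) (Set.Ioi t) = 0 := by
  rw [Measure.restrict_apply measurableSet_Ioi]
  have he : Set.Ioi t ∩ Set.Icc (0:ℝ) 1 = ∅ := by
    ext x
    simp only [Set.mem_inter_iff, Set.mem_Ioi, Set.mem_Icc, Set.mem_empty_iff_false, iff_false]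
    rintro ⟨ha, -, hc⟩; linarith
  rw [he]; simp

lemma Emin (n : ℕ) (hn : 0 < n) :
    ∫ x, x ∂(minStat n (volume.restrict (Set.Icc (0:ℝ) 1))) = 1/((n:ℝ)+1) := by
  set D := volume.restrict (Set.Icc (0:ℝ) 1) with hD
  haveI : IsProbabilityMeasure D := probD
  haveI hPM : IsProbabilityMeasure (minStat n D) := by
    rw [minStat]; exact Measure.isProbabilityMeasure_map meas_inf.aemeasurable
  obtain ⟨hint, hnn⟩ := integrable_id_of_supp (minStat n D) (minStat_supp D hn D_compl)
  rw [hint.integral_eq_integral_meas_lt hnn]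
  have hval : ∀ t ∈ Set.Ioi (0:ℝ),
      (minStat n D {a : ℝ | t < a}).toReal = if t ≤ 1 then (1-t)^n else 0 := by
    intro t ht
    have h0 : (0:ℝ) ≤ t := le_of_lt ht
    have hset : {a : ℝ | t < a} = Set.Ioi t := rfl
    rw [hset, minStat_Ioi D hn]
    by_cases h1 : t ≤ 1
    · rw [if_pos h1, D_Ioi h0 h1, ← ENNReal.ofReal_pow (by linarith)]
      rw [ENNReal.toReal_ofReal (pow_nonneg (by linarith) n)]
    · rw [if_neg h1, D_Ioi_zero (not_le.mp h1), zero_pow hn.ne']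
      simp
  rw [setIntegral_congr_fun measurableSet_Ioi (fun t ht => (measureReal_def _ _).trans (hval t ht))]
  have hsplit : Set.Ioi (0:ℝ) = Set.Ioc 0 1 ∪ Set.Ioi 1 :=
    (Set.Ioc_union_Ioi_eq_Ioi zero_le_one).symm
  have hcont : Continuous (fun t : ℝ => (1-t)^n) := by fun_prop
  have hi1 : IntegrableOn (fun t : ℝ => if t ≤ 1 then (1-t)^n else 0)
      (Set.Ioc (0:ℝ) 1) volume := by
    apply (integrableOn_congr_fun (g := fun t : ℝ => if t ≤ 1 then (1-t)^n else 0)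
      (f := fun t : ℝ => (1-t)^n) (fun t ht => (if_pos ht.2).symm) measurableSet_Ioc).mp
    exact hcont.integrableOn_Ioc
  have hi2 : IntegrableOn (fun t : ℝ => if t ≤ 1 then (1-t)^n else 0)
      (Set.Ioi (1:ℝ)) volume := by
    apply (integrableOn_congr_fun (f := fun _ : ℝ => (0:ℝ))
      (fun t ht => (if_neg (not_le.mpr ht)).symm) measurableSet_Ioi).mp
    exact integrableOn_zero
  rw [hsplit, setIntegral_union (Set.Ioc_disjoint_Ioi le_rfl) measurableSet_Ioi hi1 hi2]
  have hz : ∫ t in Set.Ioi (1:ℝ), (if t ≤ 1 then (1-t)^n else 0) = 0 := by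
    rw [setIntegral_congr_fun measurableSet_Ioi
      (fun t ht => (if_neg (not_le.mpr ht) : _))]
    exact integral_zero _ _
  rw [hz, add_zero,
    setIntegral_congr_fun measurableSet_Ioc (fun t ht => (if_pos ht.2 : _)),
    ← intervalIntegral.integral_of_le zero_le_one]
  have := intervalIntegral.integral_comp_sub_left (fun u : ℝ => u^n) 1 (a := 0) (b := 1)
  simp only [sub_zero, sub_self] at this
  rw [this, integral_pow]
  norm_num

lemma Emax (n : ℕ) (hn : 0 < n) :
    ∫ x, x ∂(maxStat n (minStat n (volume.restrict (Set.Icc (0:ℝ) 1))))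
      = ∫ t in (0:ℝ)..1, (1 - ((1:ℝ) - t^n)^n) := by
  set D := volume.restrict (Set.Icc (0:ℝ) 1) with hD
  haveI : IsProbabilityMeasure D := probD
  haveI hPM : IsProbabilityMeasure (minStat n D) := by
    rw [minStat]; exact Measure.isProbabilityMeasure_map meas_inf.aemeasurable
  haveI hPM2 : IsProbabilityMeasure (maxStat n (minStat n D)) := by
    rw [maxStat]; exact Measure.isProbabilityMeasure_map meas_sup.aemeasurable
  have hsupp := minStat_supp D hn D_compl
  obtain ⟨hint, hnn⟩ := integrable_id_of_supp (maxStat n (minStat n D))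
    (maxStat_supp (minStat n D) hn hsupp)
  rw [hint.integral_eq_integral_meas_lt hnn]
  have hval : ∀ t ∈ Set.Ioi (0:ℝ),
      (maxStat n (minStat n D) {a : ℝ | t < a}).toReal
        = if t ≤ 1 then 1 - (1-(1-t)^n)^n else 0 := by
    intro t ht
    have h0 : (0:ℝ) ≤ t := le_of_lt ht
    have hset : {a : ℝ | t < a} = Set.Ioi t := rfl
    rw [hset]
    by_cases h1 : t ≤ 1
    · rw [if_pos h1, maxStat_Ioi (minStat n D) hn]
      have hIic : minStat n D (Set.Iic t) = 1 - ENNReal.ofReal ((1-t)^n) := by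
        rw [← Set.compl_Ioi, prob_compl_eq_one_sub measurableSet_Ioi,
          minStat_Ioi D hn, D_Ioi h0 h1, ← ENNReal.ofReal_pow (by linarith)]
      rw [hIic]
      set q := ENNReal.ofReal ((1-t)^n) with hq
      have hq1 : q ≤ 1 := ENNReal.ofReal_le_one.2 (pow_le_one₀ (by linarith) (by linarith))
      have h1q : (1 - q)^n ≤ 1 := pow_le_one' tsub_le_self n
      rw [ENNReal.toReal_sub_of_le h1q ENNReal.one_ne_top, ENNReal.toReal_one,
        ENNReal.toReal_pow, ENNReal.toReal_sub_of_le hq1 ENNReal.one_ne_top,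
        ENNReal.toReal_one, hq, ENNReal.toReal_ofReal (pow_nonneg (by linarith) n)]
    · rw [if_neg h1]
      have hz : maxStat n (minStat n D) (Set.Ioi t) = 0 := by
        apply measure_mono_null _ (maxStat_supp (minStat n D) hn hsupp)
        intro x hx
        simp only [Set.mem_compl_iff, Set.mem_Icc, not_and, not_le]
        intro _
        have := not_le.mp h1
        exact lt_trans this hx
      rw [hz]; simp
  rw [setIntegral_congr_fun measurableSet_Ioi (fun t ht => (measureReal_def _ _).trans (hval t ht))]
  have hsplit : Set.Ioi (0:ℝ) = Set.Ioc 0 1 ∪ Set.Ioi 1 :=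
    (Set.Ioc_union_Ioi_eq_Ioi zero_le_one).symm
  have hcont : Continuous (fun t : ℝ => 1 - (1-(1-t)^n)^n) := by fun_prop
  have hi1 : IntegrableOn (fun t : ℝ => if t ≤ 1 then 1 - (1-(1-t)^n)^n else 0)
      (Set.Ioc (0:ℝ) 1) volume := by
    apply (integrableOn_congr_fun (f := fun t : ℝ => 1 - (1-(1-t)^n)^n)
      (fun t ht => (if_pos ht.2).symm) measurableSet_Ioc).mp
    exact hcont.integrableOn_Ioc
  have hi2 : IntegrableOn (fun t : ℝ => if t ≤ 1 then 1 - (1-(1-t)^n)^n else 0)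
      (Set.Ioi (1:ℝ)) volume := by
    apply (integrableOn_congr_fun (f := fun _ : ℝ => (0:ℝ))
      (fun t ht => (if_neg (not_le.mpr ht)).symm) measurableSet_Ioi).mp
    exact integrableOn_zero
  rw [hsplit, setIntegral_union (Set.Ioc_disjoint_Ioi le_rfl) measurableSet_Ioi hi1 hi2]
  have hz : ∫ t in Set.Ioi (1:ℝ), (if t ≤ 1 then 1 - (1-(1-t)^n)^n else 0) = 0 := by
    rw [setIntegral_congr_fun measurableSet_Ioi
      (fun t ht => (if_neg (not_le.mpr ht) : _))]
    exact integral_zero _ _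
  rw [hz, add_zero,
    setIntegral_congr_fun measurableSet_Ioc (fun t ht => (if_pos ht.2 : _)),
    ← intervalIntegral.integral_of_le zero_le_one]
  have := intervalIntegral.integral_comp_sub_left
    (fun u : ℝ => 1 - ((1:ℝ) - u^n)^n) 1 (a := 0) (b := 1)
  simp only [sub_zero, sub_self, sub_sub_cancel] at this
  rw [this]

end Expect

/-- The uniform distribution on `[0,1]` is `ln`-stretched: for every positive integer `n`,
`(n+1)(1 - n·B(n, 1 + 1/n)) ≥ ln n`, equivalently
`E[T[1:n][n:n]] ≥ (ln n) · E[T[1:n]]` for `T` uniform on `[0,1]`. -/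
theorem uniform_is_log_stretched : ∀ n : ℕ, 0 < n →
    (Real.log n ≤ ((n : ℝ) + 1) *
        (1 - (n : ℝ) * ∫ s in (0:ℝ)..1, s ^ ((n : ℝ) - 1) * (1 - s) ^ ((1 + 1 / (n : ℝ)) - 1))) ∧
    (Real.log n * ∫ x, x ∂(minStat n (MeasureTheory.volume.restrict (Set.Icc (0:ℝ) 1)))
      ≤ ∫ x, x ∂(maxStat n (minStat n (MeasureTheory.volume.restrict (Set.Icc (0:ℝ) 1))))) := by
  intro n hn
  have hpos : (0:ℝ) < (n:ℝ) + 1 := by positivity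
  have hkey := log_div_le_integral n hn
  have hJ : (∫ t in (0:ℝ)..1, (1 - ((1:ℝ) - t^n)^n))
      = 1 - ∫ t in (0:ℝ)..1, ((1:ℝ) - t^n)^n := by
    rw [intervalIntegral.integral_sub (f := fun _ : ℝ => (1:ℝ)) (g := fun t : ℝ => ((1:ℝ) - t^n)^n) intervalIntegrable_const
      (((continuous_const.sub (continuous_pow n)).pow n).continuousOn.intervalIntegrable)]
    simp
  constructor
  · rw [beta_eq n hn, ← hJ]
    have h2 := (div_le_iff₀ hpos).mp hkey
    nlinarith [h2]
  · rw [Emin n hn, Emax n hn]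
    calc Real.log n * (1/((n:ℝ)+1)) = Real.log n / ((n:ℝ)+1) := by ring
    _ ≤ _ := hkey
end
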